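/- arXiv:math/0503046 — 9 statements merged into one kernel-verified Lean document; each statement's English description precedes it below -/
import Mathlib

section
/- If g : ℝ^N → ℂ is bounded and continuously differentiable, and each partial derivative ∂_j g vanishes at infinity (belongs to C_0(ℝ^N)), then g has vanishing oscillation: for every x ∈ ℝ^N, the function y ↦ g(y + x) − g(y) vanishes at infinity. -/
open Filter Metric Topology Bornology

/-!
In finite dimension, vanishing of all partial derivatives at infinity means `‖fderiv ℝ g y‖ → 0`.
By the mean value inequality on `closedBall y ‖x‖`, `‖g (y + x) - g y‖` is at most `‖x‖` times
the supremum of `‖fderiv ℝ g‖` over that ball, which is small once the ball lies far out.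
-/

lemma Filter.Eventually.forall_closedBall_cobounded {X : Type*} [PseudoMetricSpace X]
    {P : X → Prop} (hP : ∀ᶠ z in cobounded X, P z) (r : ℝ) :
    ∀ᶠ y in cobounded X, ∀ z ∈ closedBall y r, P z := by
  have hbdd : Bornology.IsBounded {z | ¬P z} :=
    isBounded_def.2 <| by simp only [Set.compl_ofPred, not_not]; exact hP
  filter_upwards [hbdd.cthickening (δ := r)] with y hy z hz
  by_contra hPz
  exact hy (mem_cthickening_of_dist_le y z r _ hPz (mem_closedBall'.1 hz))

lemma Module.Basis.tendsto_zero_of_tendsto_apply {α ι 𝕜 E F : Type*} [Fintype ι]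
    [NontriviallyNormedField 𝕜] [CompleteSpace 𝕜]
    [NormedAddCommGroup E] [NormedSpace 𝕜 E] [NormedAddCommGroup F] [NormedSpace 𝕜 F]
    (b : Basis ι 𝕜 E) {L : α → E →L[𝕜] F} {l : Filter α}
    (h : ∀ i, Tendsto (fun a => L a (b i)) l (𝓝 0)) : Tendsto L l (𝓝 0) := by
  obtain ⟨C, -, hC⟩ := b.exists_opNorm_le (F := F)
  have hsum : Tendsto (fun a => C * ∑ i, ‖L a (b i)‖) l (𝓝 0) := by
    simpa using (tendsto_finsetSum _ fun i _ => (h i).norm).const_mul C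
  refine squeeze_zero_norm (fun a => hC (by positivity) fun i => ?_) hsum
  exact Finset.single_le_sum (f := fun i => ‖L a (b i)‖) (fun _ _ => norm_nonneg _)
    (Finset.mem_univ i)

lemma tendsto_sub_comp_add_cobounded_of_tendsto_fderiv {E F : Type*}
    [NormedAddCommGroup E] [NormedSpace ℝ E] [NormedAddCommGroup F] [NormedSpace ℝ F]
    {f : E → F} (hf : Differentiable ℝ f) (hf' : Tendsto (fderiv ℝ f) (cobounded E) (𝓝 0))
    (x : E) : Tendsto (fun y => f (y + x) - f y) (cobounded E) (𝓝 0) := by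
  refine NormedAddGroup.tendsto_nhds_zero.2 fun ε hε => ?_
  have hδ : 0 < ε / (‖x‖ + 1) := by positivity
  have hsmall : ∀ᶠ y in cobounded E, ∀ z ∈ closedBall y ‖x‖, ‖fderiv ℝ f z‖ ≤ ε / (‖x‖ + 1) :=
    ((tendsto_zero_iff_norm_tendsto_zero.1 hf').eventually_le_const hδ).forall_closedBall_cobounded _
  filter_upwards [hsmall] with y hy
  have hyx : y + x ∈ closedBall y ‖x‖ := by simp
  calc ‖f (y + x) - f y‖ ≤ ε / (‖x‖ + 1) * ‖y + x - y‖ :=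
        (convex_closedBall y ‖x‖).norm_image_sub_le_of_norm_fderiv_le (fun z _ => hf z) hy
          (mem_closedBall_self (norm_nonneg x)) hyx
    _ < ε := by
        rw [add_sub_cancel_left, div_mul_eq_mul_div, div_lt_iff₀ (by positivity)]
        nlinarith

theorem stmt0_general {N : ℕ} (g : EuclideanSpace ℝ (Fin N) → ℂ)
    (hdiff : ContDiff ℝ 1 g)
    (hderiv : ∀ j : Fin N,
      Tendsto (fun y => fderiv ℝ g y (EuclideanSpace.single j 1))
        (cocompact (EuclideanSpace ℝ (Fin N))) (nhds 0)) :
    ∀ x : EuclideanSpace ℝ (Fin N),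
      Tendsto (fun y => g (y + x) - g y)
        (cocompact (EuclideanSpace ℝ (Fin N))) (nhds 0) := by
  have hfderiv : Tendsto (fderiv ℝ g) (cocompact _) (𝓝 0) :=
    (EuclideanSpace.basisFun (Fin N) ℝ).toBasis.tendsto_zero_of_tendsto_apply
      (by simpa using hderiv)
  rw [← cobounded_eq_cocompact] at hfderiv ⊢
  exact tendsto_sub_comp_add_cobounded_of_tendsto_fderiv
    (hdiff.differentiable one_ne_zero) hfderiv

/-- If `g : ℝ^N → ℂ` is bounded and C¹, and each partial derivative `∂ⱼ g`
vanishes at infinity, then `g` has vanishing oscillation: for every `x`,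
`y ↦ g (y + x) - g y` vanishes at infinity. -/
theorem stmt0 {N : ℕ} (g : EuclideanSpace ℝ (Fin N) → ℂ)
    (hbdd : ∃ C : ℝ, ∀ y, ‖g y‖ ≤ C)
    (hdiff : ContDiff ℝ 1 g)
    (hderiv : ∀ j : Fin N,
      Tendsto (fun y => fderiv ℝ g y (EuclideanSpace.single j 1))
        (cocompact (EuclideanSpace ℝ (Fin N))) (nhds 0)) :
    ∀ x : EuclideanSpace ℝ (Fin N),
      Tendsto (fun y => g (y + x) - g y)
        (cocompact (EuclideanSpace ℝ (Fin N))) (nhds 0) :=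
  stmt0_general g hdiff hderiv
end

section
/- Let r ∈ ℕ, r ≥ 1, and let f : ℝ^N → ℂ be bounded, of class C^r, such that ∂^α f ∈ C_0(ℝ^N) for all multi-indices α with |α| = r. Then f has vanishing oscillation, and moreover ∂^β f ∈ C_0(ℝ^N) for all multi-indices β with 1 ≤ |β| ≤ r − 1. -/
/-!
The `k`-fold finite difference `Δ_{m₁} ⋯ Δ_{m_k} f (x)` is bounded by `2ᵏ sup ‖f‖`, and differs
from `Dᵏ f (x) (m₁, …, m_k)` by at most `k K (∑ ‖mᵢ‖) ∏ ‖mᵢ‖`, where `K` bounds `Dᵏ⁺¹ f` near `x`.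
Testing `Dᵏ f (x)` on vectors of length `h` gives
`‖Dᵏ f (x)‖ ≲ sup ‖f‖ / hᵏ + h · sup_{B(x, k h)} ‖Dᵏ⁺¹ f‖`: taking `h` large and then `x` far out
shows that `Dᵏ⁺¹ f → 0` forces `Dᵏ f → 0` for `k ≥ 1`. Descending from `k = r` to `k = 1`, the
mean value inequality for `f' → 0` gives the vanishing oscillation.
-/

open Filter Metric Topology
open scoped fwdDiff

theorem Filter.Eventually.forall_closedBall_cocompact {α : Type*} [PseudoMetricSpace α]
    [ProperSpace α] {P : α → Prop} (hP : ∀ᶠ y in cocompact α, P y) (R : ℝ) :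
    ∀ᶠ x in cocompact α, ∀ y ∈ closedBall x R, P y := by
  rw [hasBasis_cocompact.eventually_iff] at hP ⊢
  obtain ⟨s, hs, hPs⟩ := hP
  refine ⟨cthickening R s, hs.cthickening, fun x hx y hy => hPs fun hys => hx ?_⟩
  exact mem_cthickening_of_dist_le x y R s hys (by rwa [mem_closedBall, dist_comm] at hy)

theorem ContinuousMultilinearMap.opNorm_le_of_forall_norm_le {ι : Type*} [Fintype ι]
    {E : ι → Type*} [∀ i, NormedAddCommGroup (E i)] [∀ i, NormedSpace ℝ (E i)]
    {G : Type*} [NormedAddCommGroup G] [NormedSpace ℝ G]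
    (A : ContinuousMultilinearMap ℝ E G) {h C : ℝ} (hh : 0 < h)
    (hA : ∀ m, (∀ i, ‖m i‖ ≤ h) → ‖A m‖ ≤ C) : ‖A‖ ≤ (2 / h) ^ Fintype.card ι * C := by
  have hC : 0 ≤ C := (norm_nonneg _).trans (hA 0 fun i => by simpa using hh.le)
  refine A.opNorm_le_bound (by positivity) fun m => A.toMultilinearMap.bound_of_shell
    (ε := fun _ => h) (c := fun _ => (2 : ℝ)) (fun _ => hh) (fun _ => by norm_num)
    (fun m hm_ge hm_lt => ?_) m
  calc ‖A m‖ ≤ C := hA m fun i => (hm_lt i).le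
    _ = (2 / h) ^ Fintype.card ι * C * ∏ _i : ι, h / 2 := by
        rw [Finset.prod_const, Finset.card_univ, mul_assoc, mul_left_comm, ← mul_pow,
          div_mul_div_comm, mul_comm 2 h, div_self (by positivity), one_pow, mul_one]
    _ ≤ (2 / h) ^ Fintype.card ι * C * ∏ i, ‖m i‖ := by
        gcongr with i
        simpa using hm_ge i

/-- `multiFwdDiff m f = Δ_[m (k-1)] (⋯ (Δ_[m 0] f))`. -/
def multiFwdDiff {M G : Type*} [AddCommMonoid M] [AddCommGroup G] :
    {k : ℕ} → (Fin k → M) → (M → G) → M → G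
  | 0, _, f => f
  | _ + 1, m, f => multiFwdDiff (Fin.tail m) (Δ_[m 0] f)

theorem multiFwdDiff_cons {M G : Type*} [AddCommMonoid M] [AddCommGroup G] {k : ℕ} (w : M)
    (v : Fin k → M) (f : M → G) :
    multiFwdDiff (Fin.cons w v) f = multiFwdDiff v (Δ_[w] f) := by
  simp [multiFwdDiff]

theorem norm_multiFwdDiff_le {M G : Type*} [AddCommMonoid M] [SeminormedAddCommGroup G] {k : ℕ}
    (m : Fin k → M) {f : M → G} {C : ℝ} (hf : ∀ y, ‖f y‖ ≤ C) (x : M) :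
    ‖multiFwdDiff m f x‖ ≤ 2 ^ k * C := by
  induction k generalizing f C with
  | zero => simpa [multiFwdDiff] using hf x
  | succ k ih =>
    have hΔ : ∀ y, ‖Δ_[m 0] f y‖ ≤ 2 * C := fun y =>
      (norm_sub_le _ _).trans (by linarith [hf (y + m 0), hf y])
    simpa [multiFwdDiff, pow_succ, mul_assoc] using ih (Fin.tail m) hΔ

section Smooth

variable {E F : Type*} [NormedAddCommGroup E] [NormedSpace ℝ E]
  [NormedAddCommGroup F] [NormedSpace ℝ F]

theorem ContDiff.comp_add_right {n : WithTop ℕ∞} {f : E → F} (hf : ContDiff ℝ n f) (w : E) :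
    ContDiff ℝ n (fun y => f (y + w)) :=
  hf.comp (contDiff_id.add contDiff_const)

theorem ContDiff.fwdDiff {n : WithTop ℕ∞} {f : E → F} (hf : ContDiff ℝ n f) (w : E) :
    ContDiff ℝ n (Δ_[w] f) :=
  (hf.comp_add_right w).sub hf

theorem iteratedFDeriv_fwdDiff {n : ℕ} {f : E → F} (hf : ContDiff ℝ n f) (w x : E) :
    iteratedFDeriv ℝ n (Δ_[w] f) x = iteratedFDeriv ℝ n f (x + w) - iteratedFDeriv ℝ n f x := by
  rw [show Δ_[w] f = (fun y => f (y + w)) - f from rfl,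
    iteratedFDeriv_sub_apply (hf.comp_add_right w).contDiffAt hf.contDiffAt,
    iteratedFDeriv_comp_add_right]

theorem Convex.norm_iteratedFDeriv_sub_le {n : ℕ} {f : E → F} (hf : ContDiff ℝ (n + 1) f)
    {s : Set E} (hs : Convex ℝ s) {K : ℝ} (hK : ∀ z ∈ s, ‖iteratedFDeriv ℝ (n + 1) f z‖ ≤ K)
    {y z : E} (hy : y ∈ s) (hz : z ∈ s) :
    ‖iteratedFDeriv ℝ n f z - iteratedFDeriv ℝ n f y‖ ≤ K * ‖z - y‖ :=
  hs.norm_image_sub_le_of_norm_fderiv_le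
    (fun u _ => hf.differentiable_iteratedFDeriv (by exact_mod_cast n.lt_succ_self) u)
    (fun u hu => norm_fderiv_iteratedFDeriv.trans_le (hK u hu)) hy hz

theorem norm_iteratedFDeriv_add_sub_sub_le {n : ℕ} {f : E → F} (hf : ContDiff ℝ (n + 2) f)
    {x w : E} {K : ℝ} (hK : ∀ z ∈ closedBall x ‖w‖, ‖iteratedFDeriv ℝ (n + 2) f z‖ ≤ K)
    (v : Fin n → E) :
    ‖iteratedFDeriv ℝ n f (x + w) v - iteratedFDeriv ℝ n f x v
        - iteratedFDeriv ℝ (n + 1) f x (Fin.cons w v)‖ ≤ K * ‖w‖ ^ 2 * ∏ i, ‖v i‖ := by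
  set g := iteratedFDeriv ℝ n f
  have hx : x ∈ closedBall x ‖w‖ := mem_closedBall_self (norm_nonneg w)
  have hxw : x + w ∈ closedBall x ‖w‖ := by simp
  have hg' : ∀ z ∈ closedBall x ‖w‖, ‖fderiv ℝ g z - fderiv ℝ g x‖ ≤ K * ‖w‖ := by
    intro z hz
    rw [fderiv_iteratedFDeriv, Function.comp_apply, Function.comp_apply,
      ← LinearIsometryEquiv.map_sub, LinearIsometryEquiv.norm_map]
    refine ((convex_closedBall x ‖w‖).norm_iteratedFDeriv_sub_le hf hK hx hz).trans ?_
    gcongr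
    · exact (norm_nonneg _).trans (hK x hx)
    · rwa [← dist_eq_norm, ← mem_closedBall]
  have htaylor := (convex_closedBall x ‖w‖).norm_image_sub_le_of_norm_fderiv_le'
    (fun u _ => (hf.differentiable_iteratedFDeriv (by norm_cast; omega)) u) hg' hx hxw
  rw [add_sub_cancel_left] at htaylor
  rw [iteratedFDeriv_succ_apply_left, Fin.cons_zero, Fin.tail_cons]
  calc ‖g (x + w) v - g x v - fderiv ℝ g x w v‖ = ‖(g (x + w) - g x - fderiv ℝ g x w) v‖ := rfl
    _ ≤ ‖g (x + w) - g x - fderiv ℝ g x w‖ * ∏ i, ‖v i‖ :=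
        ContinuousMultilinearMap.le_opNorm _ _
    _ ≤ K * ‖w‖ * ‖w‖ * ∏ i, ‖v i‖ := by gcongr
    _ = K * ‖w‖ ^ 2 * ∏ i, ‖v i‖ := by ring

theorem norm_iteratedFDeriv_fwdDiff_le {n : ℕ} {f : E → F} (hf : ContDiff ℝ (n + 1) f)
    {x w y : E} {R K : ℝ} (hK : ∀ z ∈ closedBall x (‖w‖ + R), ‖iteratedFDeriv ℝ (n + 1) f z‖ ≤ K)
    (hy : y ∈ closedBall x R) : ‖iteratedFDeriv ℝ n (Δ_[w] f) y‖ ≤ K * ‖w‖ := by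
  rw [iteratedFDeriv_fwdDiff hf.of_succ]
  have hy' : y ∈ closedBall x (‖w‖ + R) :=
    closedBall_subset_closedBall (le_add_of_nonneg_left (norm_nonneg w)) hy
  have hyw : y + w ∈ closedBall x (‖w‖ + R) := by
    rw [mem_closedBall] at hy ⊢
    linarith [dist_triangle (y + w) y x, show dist (y + w) y = ‖w‖ by simp]
  simpa using (convex_closedBall _ _).norm_iteratedFDeriv_sub_le hf hK hy' hyw

theorem norm_multiFwdDiff_sub_iteratedFDeriv_le {k : ℕ} {f : E → F} (hf : ContDiff ℝ (k + 1) f)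
    (x : E) (m : Fin k → E) {K : ℝ}
    (hK : ∀ y ∈ closedBall x (∑ i, ‖m i‖), ‖iteratedFDeriv ℝ (k + 1) f y‖ ≤ K) :
    ‖multiFwdDiff m f x - iteratedFDeriv ℝ k f x m‖ ≤ k * K * (∑ i, ‖m i‖) * ∏ i, ‖m i‖ := by
  induction k generalizing f K with
  | zero => simp [multiFwdDiff]
  | succ k ih =>
    obtain ⟨w, v, rfl⟩ : ∃ w v, m = Fin.cons w v := ⟨m 0, Fin.tail m, (Fin.cons_self_tail m).symm⟩
    simp only [Fin.sum_univ_succ, Fin.prod_univ_succ, Fin.cons_zero, Fin.cons_succ] at hK ⊢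
    have hS : 0 ≤ ∑ i, ‖v i‖ := by positivity
    have hP : 0 ≤ ∏ i, ‖v i‖ := by positivity
    have hK0 : 0 ≤ K := (norm_nonneg _).trans (hK x (mem_closedBall_self (by positivity)))
    have hf' : ContDiff ℝ (k + 1) f := hf.of_le (by norm_cast; omega)
    have hrest := ih (hf'.fwdDiff w) v fun y => norm_iteratedFDeriv_fwdDiff_le hf hK
    have htaylor := norm_iteratedFDeriv_add_sub_sub_le hf
      (fun z hz => hK z (closedBall_subset_closedBall (le_add_of_nonneg_right hS) hz)) v
    rw [iteratedFDeriv_fwdDiff hf'.of_succ, sub_apply] at hrest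
    have hsplit : multiFwdDiff v (Δ_[w] f) x - iteratedFDeriv ℝ (k + 1) f x (Fin.cons w v)
        = (multiFwdDiff v (Δ_[w] f) x
            - (iteratedFDeriv ℝ k f (x + w) v - iteratedFDeriv ℝ k f x v))
          + (iteratedFDeriv ℝ k f (x + w) v - iteratedFDeriv ℝ k f x v
            - iteratedFDeriv ℝ (k + 1) f x (Fin.cons w v)) := by abel
    rw [multiFwdDiff_cons, hsplit]
    refine (norm_add_le _ _).trans ((add_le_add hrest htaylor).trans ?_)
    push_cast
    linarith [mul_nonneg (mul_nonneg (mul_nonneg hK0 (norm_nonneg w)) hS) hP,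
      mul_nonneg (mul_nonneg (mul_nonneg k.cast_nonneg hK0) (sq_nonneg ‖w‖)) hP]

theorem norm_iteratedFDeriv_le_of_forall_closedBall {k : ℕ} {f : E → F}
    (hf : ContDiff ℝ (k + 1) f) {M : ℝ} (hM : ∀ y, ‖f y‖ ≤ M) {x : E} {h δ : ℝ} (hh : 0 < h)
    (hδ : ∀ y ∈ closedBall x (k * h), ‖iteratedFDeriv ℝ (k + 1) f y‖ ≤ δ) :
    ‖iteratedFDeriv ℝ k f x‖ ≤ (4 / h) ^ k * M + 2 ^ k * k ^ 2 * h * δ := by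
  have hδ0 : 0 ≤ δ := (norm_nonneg _).trans (hδ x (mem_closedBall_self (by positivity)))
  have hbound : ∀ m : Fin k → E, (∀ i, ‖m i‖ ≤ h) →
      ‖iteratedFDeriv ℝ k f x m‖ ≤ 2 ^ k * M + k * δ * (k * h) * h ^ k := by
    intro m hm
    have hS : ∑ i, ‖m i‖ ≤ k * h := by
      simpa using Finset.sum_le_sum fun i (_ : i ∈ Finset.univ) => hm i
    have hP : ∏ i, ‖m i‖ ≤ h ^ k := by
      simpa using Finset.prod_le_prod (fun i _ => norm_nonneg _) fun i (_ : i ∈ Finset.univ) => hm i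
    have happrox := norm_multiFwdDiff_sub_iteratedFDeriv_le hf x m
      fun y hy => hδ y (closedBall_subset_closedBall hS hy)
    calc ‖iteratedFDeriv ℝ k f x m‖
        ≤ ‖multiFwdDiff m f x‖ + ‖multiFwdDiff m f x - iteratedFDeriv ℝ k f x m‖ :=
          norm_le_insert _ _
      _ ≤ 2 ^ k * M + k * δ * (∑ i, ‖m i‖) * ∏ i, ‖m i‖ :=
          add_le_add (norm_multiFwdDiff_le m hM x) happrox
      _ ≤ 2 ^ k * M + k * δ * (k * h) * h ^ k := by gcongr
  calc ‖iteratedFDeriv ℝ k f x‖ ≤ (2 / h) ^ k * (2 ^ k * M + k * δ * (k * h) * h ^ k) := by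
        simpa using (iteratedFDeriv ℝ k f x).opNorm_le_of_forall_norm_le hh hbound
    _ = (4 / h) ^ k * M + 2 ^ k * k ^ 2 * h * δ := by
        rw [div_pow, div_pow, show (4 : ℝ) ^ k = 2 ^ k * 2 ^ k by rw [← mul_pow]; norm_num]
        field_simp

theorem tendsto_norm_iteratedFDeriv_cocompact_of_succ [ProperSpace E] {k : ℕ} (hk : k ≠ 0)
    {f : E → F} (hf : ContDiff ℝ (k + 1) f) {M : ℝ} (hM : ∀ y, ‖f y‖ ≤ M)
    (hlim : Tendsto (fun y => ‖iteratedFDeriv ℝ (k + 1) f y‖) (cocompact E) (𝓝 0)) :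
    Tendsto (fun y => ‖iteratedFDeriv ℝ k f y‖) (cocompact E) (𝓝 0) := by
  refine Metric.tendsto_nhds.2 fun ε hε => ?_
  have hsmall : Tendsto (fun h : ℝ => (4 / h) ^ k * M) atTop (𝓝 0) := by
    simpa [hk] using ((tendsto_const_nhds.div_atTop tendsto_id).pow k).mul_const M
  obtain ⟨h, hhM, hh⟩ :=
    ((hsmall.eventually (gt_mem_nhds (half_pos hε))).and (eventually_gt_atTop 0)).exists
  obtain ⟨δ, hδ, hδε⟩ := exists_pos_mul_lt (half_pos hε) (2 ^ k * k ^ 2 * h)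
  filter_upwards [(hlim.eventually (gt_mem_nhds hδ)).forall_closedBall_cocompact (k * h)]
    with x hx
  rw [dist_zero_right, norm_norm]
  linarith [norm_iteratedFDeriv_le_of_forall_closedBall hf hM hh fun y hy => (hx y hy).le]

theorem tendsto_norm_iteratedFDeriv_cocompact_of_le [ProperSpace E] {r : ℕ} {f : E → F}
    (hf : ContDiff ℝ r f) {M : ℝ} (hM : ∀ y, ‖f y‖ ≤ M)
    (hlim : Tendsto (fun y => ‖iteratedFDeriv ℝ r f y‖) (cocompact E) (𝓝 0))
    {i : ℕ} (hi : i ≠ 0) (hir : i ≤ r) :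
    Tendsto (fun y => ‖iteratedFDeriv ℝ i f y‖) (cocompact E) (𝓝 0) := by
  induction hir using Nat.decreasingInduction with
  | self => exact hlim
  | of_succ i hir ih =>
    exact tendsto_norm_iteratedFDeriv_cocompact_of_succ hi (hf.of_le (by exact_mod_cast hir)) hM
      (ih i.succ_ne_zero)

theorem tendsto_sub_cocompact_of_tendsto_norm_fderiv [ProperSpace E] {f : E → F}
    (hf : Differentiable ℝ f) (hlim : Tendsto (fun y => ‖fderiv ℝ f y‖) (cocompact E) (𝓝 0))
    (x : E) : Tendsto (fun y => f (y + x) - f y) (cocompact E) (𝓝 0) := by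
  refine NormedAddGroup.tendsto_nhds_zero.2 fun ε hε => ?_
  obtain ⟨δ, hδ, hδε⟩ := exists_pos_mul_lt hε ‖x‖
  filter_upwards [(hlim.eventually (gt_mem_nhds hδ)).forall_closedBall_cocompact ‖x‖] with y hy
  have hmv := (convex_closedBall y ‖x‖).norm_image_sub_le_of_norm_fderiv_le
    (fun z _ => hf z) (fun z hz => (hy z hz).le) (mem_closedBall_self (norm_nonneg x))
    (by simp : y + x ∈ closedBall y ‖x‖)
  rw [add_sub_cancel_left] at hmv
  linarith

end Smooth

/-- If `f : ℝ^N → ℂ` is bounded, of class `C^r` (`r ≥ 1`), and all derivatives of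
order exactly `r` vanish at infinity, then `f` has vanishing oscillation and all
derivatives of order `1 ≤ i ≤ r - 1` vanish at infinity. -/
theorem stmt1 {N : ℕ} (r : ℕ) (hr : 1 ≤ r) (f : EuclideanSpace ℝ (Fin N) → ℂ)
    (hbdd : ∃ C : ℝ, ∀ y, ‖f y‖ ≤ C)
    (hdiff : ContDiff ℝ (r : ℕ∞) f)
    (htop : Tendsto (fun y => ‖iteratedFDeriv ℝ r f y‖)
      (cocompact (EuclideanSpace ℝ (Fin N))) (nhds 0)) :
    (∀ x : EuclideanSpace ℝ (Fin N),
      Tendsto (fun y => f (y + x) - f y)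
        (cocompact (EuclideanSpace ℝ (Fin N))) (nhds 0)) ∧
    (∀ i : ℕ, 1 ≤ i → i ≤ r - 1 →
      Tendsto (fun y => ‖iteratedFDeriv ℝ i f y‖)
        (cocompact (EuclideanSpace ℝ (Fin N))) (nhds 0)) := by
  obtain ⟨M, hM⟩ := hbdd
  have hder : ∀ i, 1 ≤ i → i ≤ r → Tendsto (fun y => ‖iteratedFDeriv ℝ i f y‖)
      (cocompact (EuclideanSpace ℝ (Fin N))) (𝓝 0) := fun i hi hir =>
    tendsto_norm_iteratedFDeriv_cocompact_of_le hdiff hM htop (by omega) hir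
  refine ⟨tendsto_sub_cocompact_of_tendsto_norm_fderiv
    (hdiff.differentiable (by norm_cast; omega)) ?_, fun i hi hir => hder i hi (by omega)⟩
  simpa using hder 1 le_rfl hr
end

section
/- If h : ℝ^N → ℂ is bounded, continuously differentiable, and each partial derivative ∂_j h has vanishing oscillation, then each ∂_j h vanishes at infinity. -/
/-!
Write `g = ∂ᵥh`. Uniform continuity makes the translates `y ↦ g (y + x) - g y` uniformly
equicontinuous in `x`, so by Ascoli their pointwise convergence to `0` is uniform for `x` in the
compact segment `[0, T] • v`. Far out, `g` is therefore almost constant on `y + [0, T] • v`; the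
mean value inequality along that segment then gives `T ‖g y‖ ≤ 2 sup ‖h‖ + T ε / 2`, and `T` large
forces `‖g y‖ < ε`.
-/

open Filter Topology Set

variable {E F : Type*} [NormedAddCommGroup E] [NormedAddCommGroup F]

theorem uniformEquicontinuous_sub_translate {g : E → F} (hg : UniformContinuous g) :
    UniformEquicontinuous fun y x => g (y + x) - g y := by
  rw [Metric.uniformEquicontinuous_iff]
  intro ε hε
  obtain ⟨δ, hδ, hgδ⟩ := Metric.uniformContinuous_iff.mp hg ε hε
  refine ⟨δ, hδ, fun x x' hxx' y => ?_⟩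
  rw [dist_sub_right]
  exact hgδ (by rwa [dist_add_left])

theorem IsCompact.tendstoUniformlyOn_sub_translate {K : Set E} (hK : IsCompact K) {g : E → F}
    (hg : UniformContinuous g) {l : Filter E}
    (hosc : ∀ x ∈ K, Tendsto (fun y => g (y + x) - g y) l (𝓝 0)) :
    TendstoUniformlyOn (fun y x => g (y + x) - g y) 0 l K := by
  have : CompactSpace K := isCompact_iff_compactSpace.mp hK
  have hequi : Equicontinuous (K.domRestrict ∘ fun y x => g (y + x) - g y) :=
    (equicontinuous_restrict_iff _).mpr
      ((uniformEquicontinuous_sub_translate hg).equicontinuous.equicontinuousOn K)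
  rw [tendstoUniformlyOn_iff_tendstoUniformly_comp_coe]
  exact UniformFun.tendsto_iff_tendstoUniformly.mp <|
    (hequi.tendsto_uniformFun_iff_pi l _).mpr (tendsto_pi_nhds.mpr fun x => hosc x x.2)

theorem mul_norm_deriv_zero_le [NormedSpace ℝ F] {f f' : ℝ → F} {C δ T : ℝ}
    (hf : ∀ t, HasDerivAt f (f' t) t) (hC : ∀ t, ‖f t‖ ≤ C) (hT : 0 ≤ T)
    (hδ : ∀ s ∈ Icc 0 T, ‖f' s - f' 0‖ ≤ δ) :
    T * ‖f' 0‖ ≤ 2 * C + δ * T := by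
  have hmvt := norm_image_sub_le_of_norm_deriv_le_segment'
    (f := fun t => f t - t • f' 0) (f' := fun t => f' t - f' 0)
    (fun t _ => (((hf t).sub ((hasDerivAt_id t).smul_const (f' 0))).congr_deriv
      (by simp)).hasDerivWithinAt)
    (fun s hs => hδ s (Ico_subset_Icc_self hs)) T (right_mem_Icc.mpr hT)
  simp only [zero_smul, sub_zero] at hmvt
  calc T * ‖f' 0‖ = ‖T • f' 0‖ := by rw [norm_smul, Real.norm_of_nonneg hT]
    _ ≤ ‖f T - f 0‖ + ‖f T - T • f' 0 - f 0‖ := by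
        rw [← norm_neg (f T - T • f' 0 - f 0)]
        exact (norm_add_le _ _).trans_eq' (by congr 1; abel)
    _ ≤ (C + C) + δ * T := add_le_add ((norm_sub_le _ _).trans (add_le_add (hC T) (hC 0))) hmvt
    _ = 2 * C + δ * T := by ring

theorem tendsto_fderiv_apply_zero_of_tendsto_sub_translate [NormedSpace ℝ E] [NormedSpace ℝ F]
    {h : E → F} {C : ℝ} (hC : ∀ y, ‖h y‖ ≤ C) (hh : Differentiable ℝ h) (v : E)
    (huc : UniformContinuous fun y => fderiv ℝ h y v) {l : Filter E}
    (hosc : ∀ t : ℝ, Tendsto (fun y => fderiv ℝ h (y + t • v) v - fderiv ℝ h y v) l (𝓝 0)) :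
    Tendsto (fun y => fderiv ℝ h y v) l (𝓝 0) := by
  rw [Metric.tendsto_nhds]
  intro ε hε
  have hC0 : 0 ≤ C := (norm_nonneg _).trans (hC 0)
  set T := 4 * C / ε + 1 with hT
  have hT0 : 0 < T := by positivity
  have hK : IsCompact ((· • v) '' Icc 0 T) :=
    isCompact_Icc.image (continuous_id.smul continuous_const)
  have hunif := hK.tendstoUniformlyOn_sub_translate huc (by rintro _ ⟨t, -, rfl⟩; exact hosc t)
  filter_upwards [Metric.tendstoUniformlyOn_iff.mp hunif (ε / 2) (by positivity)] with y hy
  have hline := mul_norm_deriv_zero_le (f := fun t => h (y + t • v))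
    (f' := fun t => fderiv ℝ h (y + t • v) v) (C := C) (δ := ε / 2)
    (fun t => (hh _).hasFDerivAt.comp_hasDerivAt t
      (by simpa using ((hasDerivAt_id t).smul_const v).const_add y))
    (fun t => hC _) hT0.le
    (fun s hs => by simpa [dist_eq_norm, norm_sub_rev] using (hy (s • v) ⟨s, hs, rfl⟩).le)
  simp only [zero_smul, add_zero] at hline
  have hTε : T * ε = 4 * C + ε := by rw [hT]; field_simp
  rw [dist_zero_right]
  exact lt_of_mul_lt_mul_left (by linarith) hT0.le

theorem stmt2_general {N : ℕ} (h : EuclideanSpace ℝ (Fin N) → ℂ)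
    (hbdd : ∃ C : ℝ, ∀ y, ‖h y‖ ≤ C)
    (hdiff : ContDiff ℝ 1 h)
    (hduc : ∀ j : Fin N,
      UniformContinuous (fun y => fderiv ℝ h y (EuclideanSpace.single j 1)))
    (hVO : ∀ j : Fin N, ∀ x : EuclideanSpace ℝ (Fin N),
      Tendsto (fun y => fderiv ℝ h (y + x) (EuclideanSpace.single j 1)
          - fderiv ℝ h y (EuclideanSpace.single j 1))
        (cocompact (EuclideanSpace ℝ (Fin N))) (nhds 0)) :
    ∀ j : Fin N,
      Tendsto (fun y => fderiv ℝ h y (EuclideanSpace.single j 1))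
        (cocompact (EuclideanSpace ℝ (Fin N))) (nhds 0) := by
  intro j
  obtain ⟨C, hC⟩ := hbdd
  exact tendsto_fderiv_apply_zero_of_tendsto_sub_translate hC
    (hdiff.differentiable one_ne_zero) _ (hduc j) fun t => hVO j _

/-- If `h : ℝ^N → ℂ` is bounded and C¹ and each partial derivative `∂ⱼ h` is a
bounded uniformly continuous function with vanishing oscillation, then each
`∂ⱼ h` vanishes at infinity. -/
theorem stmt2 {N : ℕ} (h : EuclideanSpace ℝ (Fin N) → ℂ)
    (hbdd : ∃ C : ℝ, ∀ y, ‖h y‖ ≤ C)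
    (hdiff : ContDiff ℝ 1 h)
    (hdbdd : ∀ j : Fin N, ∃ C : ℝ, ∀ y,
      ‖fderiv ℝ h y (EuclideanSpace.single j 1)‖ ≤ C)
    (hduc : ∀ j : Fin N,
      UniformContinuous (fun y => fderiv ℝ h y (EuclideanSpace.single j 1)))
    (hVO : ∀ j : Fin N, ∀ x : EuclideanSpace ℝ (Fin N),
      Tendsto (fun y => fderiv ℝ h (y + x) (EuclideanSpace.single j 1)
          - fderiv ℝ h y (EuclideanSpace.single j 1))
        (cocompact (EuclideanSpace ℝ (Fin N))) (nhds 0)) :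
    ∀ j : Fin N,
      Tendsto (fun y => fderiv ℝ h y (EuclideanSpace.single j 1))
        (cocompact (EuclideanSpace ℝ (Fin N))) (nhds 0) :=
  stmt2_general h hbdd hdiff hduc hVO
end

section
/- Let h : ℝ^N → ℝ be a symbol of type s, i.e. h is smooth and for every multi-index α there is c_α with |∂^α h(p)| ≤ c_α ⟨p⟩^{s−|α|}, where ⟨p⟩ = √(1+|p|²). Fix a ≥ −inf h + 1 and set h_a := h + a. Then the pointwise inverse h_a^{−1}(p) = (h(p)+a)^{−1} is well defined (h_a ≥ 1 pointwise), and if moreover h is elliptic of type s > 0 (there are R, c > 0 with c⟨p⟩^s ≤ h(p) for |p| ≥ R), then h_a^{−1} is a symbol of type −s. -/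
open Filter

/-- The Japanese bracket `⟨p⟩ = √(1 + |p|²)`. -/
noncomputable def jbr {N : ℕ} (p : EuclideanSpace ℝ (Fin N)) : ℝ :=
  Real.sqrt (1 + ‖p‖ ^ 2)

/-- `h` is a symbol of type `s`: smooth with `‖∂^α h(p)‖ ≤ c_α ⟨p⟩^(s - |α|)`. -/
def IsSymbol {N : ℕ} (s : ℝ) (h : EuclideanSpace ℝ (Fin N) → ℝ) : Prop :=
  ContDiff ℝ (⊤ : ℕ∞) h ∧
    ∀ n : ℕ, ∃ c : ℝ, ∀ p, ‖iteratedFDeriv ℝ n h p‖ ≤ c * jbr p ^ (s - (n : ℝ))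

namespace Stmt4Aux

variable {N : ℕ}

lemma one_le_jbr (p : EuclideanSpace ℝ (Fin N)) : 1 ≤ jbr p := by
  have h1 : Real.sqrt 1 ≤ Real.sqrt (1 + ‖p‖ ^ 2) :=
    Real.sqrt_le_sqrt (by nlinarith [sq_nonneg ‖p‖])
  rw [Real.sqrt_one] at h1
  exact h1

lemma jbr_pos (p : EuclideanSpace ℝ (Fin N)) : 0 < jbr p :=
  lt_of_lt_of_le one_pos (one_le_jbr p)

lemma norm_le_jbr (p : EuclideanSpace ℝ (Fin N)) : ‖p‖ ≤ jbr p := by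
  calc ‖p‖ = Real.sqrt (‖p‖ ^ 2) := (Real.sqrt_sq (norm_nonneg p)).symm
    _ ≤ Real.sqrt (1 + ‖p‖ ^ 2) := Real.sqrt_le_sqrt (by nlinarith)
    _ = jbr p := rfl

/-- Key induction: the inverse of a nice function is a symbol of type `-s`. -/
lemma key (s : ℝ) (f : EuclideanSpace ℝ (Fin N) → ℝ)
    (hf : ContDiff ℝ (⊤ : ℕ∞) f)
    (hone : ∀ p, 1 ≤ f p)
    (hA : ∀ n : ℕ, ∃ c : ℝ, 0 ≤ c ∧ ∀ p, ‖iteratedFDeriv ℝ n f p‖ ≤ c * jbr p ^ (s - (n : ℝ)))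
    (hC : ∃ C : ℝ, 0 ≤ C ∧ ∀ p, jbr p ^ s ≤ C * f p) :
    ∀ n : ℕ, ∃ c : ℝ, 0 ≤ c ∧
      ∀ p, ‖iteratedFDeriv ℝ n (fun p => (f p)⁻¹) p‖ ≤ c * jbr p ^ (-s - (n : ℝ)) := by
  set g : EuclideanSpace ℝ (Fin N) → ℝ := fun p => (f p)⁻¹ with hgdef
  have hfpos : ∀ p, 0 < f p := fun p => lt_of_lt_of_le one_pos (hone p)
  have hfne : ∀ p, f p ≠ 0 := fun p => (hfpos p).ne'
  have hg : ContDiff ℝ (⊤ : ℕ∞) g := hf.inv hfne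
  choose ca hca0 hca using hA
  intro n
  induction n using Nat.strong_induction_on with
  | _ n IH =>
    match n with
    | 0 =>
      obtain ⟨C, hC0, hCle⟩ := hC
      refine ⟨C, hC0, fun p => ?_⟩
      rw [norm_iteratedFDeriv_zero]
      have hjs : (0:ℝ) < jbr p ^ s := Real.rpow_pos_of_pos (jbr_pos p) s
      have hg0 : ‖g p‖ = (f p)⁻¹ := by
        rw [Real.norm_eq_abs, abs_of_pos (inv_pos.mpr (hfpos p))]
      rw [hg0]
      have e1 : (-s - ((0:ℕ):ℝ)) = -s := by push_cast; ring
      rw [e1, Real.rpow_neg (jbr_pos p).le]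
      have h2 : (f p)⁻¹ * jbr p ^ s ≤ C := by
        calc (f p)⁻¹ * jbr p ^ s ≤ (f p)⁻¹ * (C * f p) :=
              mul_le_mul_of_nonneg_left (hCle p) (inv_nonneg.mpr (hfpos p).le)
          _ = C := by rw [mul_comm C (f p), ← mul_assoc, inv_mul_cancel₀ (hfne p), one_mul]
      calc (f p)⁻¹ = (f p)⁻¹ * jbr p ^ s * (jbr p ^ s)⁻¹ := by
            rw [mul_assoc, mul_inv_cancel₀ hjs.ne', mul_one]
        _ ≤ C * (jbr p ^ s)⁻¹ :=
            mul_le_mul_of_nonneg_right h2 (inv_nonneg.mpr hjs.le)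
    | (n + 1) =>
      -- uniform constant for f up to order n+1
      set A : ℝ := ∑ j ∈ Finset.range (n + 2), ca j with hAdef
      have hA0 : 0 ≤ A := Finset.sum_nonneg fun i _ => hca0 i
      have hAle : ∀ m, m ≤ n + 1 → ca m ≤ A := fun m hm =>
        Finset.single_le_sum (fun i _ => hca0 i) (Finset.mem_range.mpr (by omega))
      -- uniform constant for g up to order n
      choose cg hcg0 hcg using IH
      set cg' : ℕ → ℝ := fun m => if hm : m < n + 1 then cg m hm else 0 with hcg'def
      have hcg'0 : ∀ m, 0 ≤ cg' m := by
        intro m; simp only [hcg'def]; split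
        · exact hcg0 _ _
        · exact le_refl 0
      set B : ℝ := ∑ j ∈ Finset.range (n + 1), cg' j with hBdef
      have hB0 : 0 ≤ B := Finset.sum_nonneg fun i _ => hcg'0 i
      have hBle : ∀ m, m < n + 1 → ∀ p,
          ‖iteratedFDeriv ℝ m g p‖ ≤ B * jbr p ^ (-s - (m : ℝ)) := by
        intro m hm p
        have h1 := hcg m hm p
        have h2 : cg m hm ≤ B := by
          have : cg' m = cg m hm := by simp only [hcg'def]; rw [dif_pos hm]
          rw [← this]
          exact Finset.single_le_sum (fun i _ => hcg'0 i) (Finset.mem_range.mpr hm)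
        exact h1.trans (mul_le_mul_of_nonneg_right h2
          (Real.rpow_nonneg (jbr_pos p).le _))
      -- smoothness facts
      have hgg : ContDiff ℝ (⊤ : ℕ∞) (fun y => -(g y * g y)) := (hg.mul hg).neg
      have hdf : ContDiff ℝ (⊤ : ℕ∞) (fderiv ℝ f) := hf.fderiv_right (by simp)
      -- derivative identity
      have hderiv : fderiv ℝ g = fun y => (-(g y * g y)) • fderiv ℝ f y := by
        funext q
        have h1 : HasFDerivAt f (fderiv ℝ f q) q :=
          ((hf.differentiable (by simp)) q).hasFDerivAt
        have h2 := (hasDerivAt_inv (hfne q)).comp_hasFDerivAt q h1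
        have h3 : HasFDerivAt g ((-(f q ^ 2)⁻¹) • fderiv ℝ f q) q := h2
        rw [h3.fderiv]
        congr 1
        simp only [hgdef]
        rw [sq, mul_inv]
      refine ⟨∑ i ∈ Finset.range (n + 1), (n.choose i : ℝ) * 2 ^ i * B ^ 2 * A,
        Finset.sum_nonneg fun i _ => by positivity, fun p => ?_⟩
      rw [← norm_iteratedFDeriv_fderiv, hderiv]
      have hsmul := norm_iteratedFDeriv_smul_le (𝕜 := ℝ)
        (f := fun y => -(g y * g y)) (g := fderiv ℝ f) hgg hdf p (n := n)
        (by exact_mod_cast (le_top : (n : ℕ∞) ≤ ⊤))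
      refine hsmul.trans ?_
      have hterm : ∀ i ∈ Finset.range (n + 1),
          (n.choose i : ℝ) * ‖iteratedFDeriv ℝ i (fun y => -(g y * g y)) p‖ *
              ‖iteratedFDeriv ℝ (n - i) (fderiv ℝ f) p‖ ≤
            ((n.choose i : ℝ) * 2 ^ i * B ^ 2 * A) * jbr p ^ (-s - ((n + 1 : ℕ) : ℝ)) := by
        intro i hi
        have hin : i ≤ n := Nat.lt_succ_iff.mp (Finset.mem_range.mp hi)
        -- bound on the scalar part
        have t1 : ‖iteratedFDeriv ℝ i (fun y => -(g y * g y)) p‖ =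
            ‖iteratedFDeriv ℝ i (fun y => g y * g y) p‖ := by
          rw [show (fun y => -(g y * g y)) = -(fun y => g y * g y) from rfl,
            iteratedFDeriv_neg_apply, norm_neg]
        have t2 : ‖iteratedFDeriv ℝ i (fun y => g y * g y) p‖ ≤
            (2:ℝ) ^ i * B ^ 2 * jbr p ^ (-s - s - (i : ℝ)) := by
          have hmul := norm_iteratedFDeriv_mul_le (𝕜 := ℝ) hg hg p (n := i)
            (by exact_mod_cast (le_top : (i : ℕ∞) ≤ ⊤))
          refine hmul.trans ?_
          have hterm2 : ∀ j ∈ Finset.range (i + 1),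
              (i.choose j : ℝ) * ‖iteratedFDeriv ℝ j g p‖ *
                  ‖iteratedFDeriv ℝ (i - j) g p‖ ≤
                (i.choose j : ℝ) * (B ^ 2 * jbr p ^ (-s - s - (i : ℝ))) := by
            intro j hj
            have hji : j ≤ i := Nat.lt_succ_iff.mp (Finset.mem_range.mp hj)
            have b1 := hBle j (by omega) p
            have b2 := hBle (i - j) (by omega) p
            have hexp : jbr p ^ (-s - (j : ℝ)) * jbr p ^ (-s - ((i - j : ℕ) : ℝ)) =
                jbr p ^ (-s - s - (i : ℝ)) := by
              rw [← Real.rpow_add (jbr_pos p)]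
              congr 1
              rw [Nat.cast_sub hji]
              ring
            calc (i.choose j : ℝ) * ‖iteratedFDeriv ℝ j g p‖ *
                  ‖iteratedFDeriv ℝ (i - j) g p‖
                ≤ (i.choose j : ℝ) * (B * jbr p ^ (-s - (j : ℝ))) *
                  (B * jbr p ^ (-s - ((i - j : ℕ) : ℝ))) := by
                  refine mul_le_mul (mul_le_mul_of_nonneg_left b1 (by positivity)) b2
                    (norm_nonneg _) ?_
                  have : (0:ℝ) ≤ B * jbr p ^ (-s - (j : ℝ)) :=
                    mul_nonneg hB0 (Real.rpow_nonneg (jbr_pos p).le _)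
                  positivity
              _ = (i.choose j : ℝ) * (B ^ 2 *
                  (jbr p ^ (-s - (j : ℝ)) * jbr p ^ (-s - ((i - j : ℕ) : ℝ)))) := by ring
              _ = (i.choose j : ℝ) * (B ^ 2 * jbr p ^ (-s - s - (i : ℝ))) := by rw [hexp]
          calc ∑ j ∈ Finset.range (i + 1), (i.choose j : ℝ) *
                ‖iteratedFDeriv ℝ j g p‖ * ‖iteratedFDeriv ℝ (i - j) g p‖
              ≤ ∑ j ∈ Finset.range (i + 1),
                (i.choose j : ℝ) * (B ^ 2 * jbr p ^ (-s - s - (i : ℝ))) :=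
              Finset.sum_le_sum hterm2
            _ = (∑ j ∈ Finset.range (i + 1), (i.choose j : ℝ)) *
                (B ^ 2 * jbr p ^ (-s - s - (i : ℝ))) := by rw [← Finset.sum_mul]
            _ = (2:ℝ) ^ i * B ^ 2 * jbr p ^ (-s - s - (i : ℝ)) := by
                have : (∑ j ∈ Finset.range (i + 1), (i.choose j : ℝ)) = (2:ℝ) ^ i := by
                  rw [← Nat.cast_sum]
                  rw [Nat.sum_range_choose]
                  push_cast; ring
                rw [this]; ring
        -- bound on the fderiv part
        have t3 : ‖iteratedFDeriv ℝ (n - i) (fderiv ℝ f) p‖ ≤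
            A * jbr p ^ (s - ((n - i + 1 : ℕ) : ℝ)) := by
          rw [norm_iteratedFDeriv_fderiv]
          exact (hca (n - i + 1) p).trans (mul_le_mul_of_nonneg_right
            (hAle _ (by omega)) (Real.rpow_nonneg (jbr_pos p).le _))
        have hexp2 : jbr p ^ (-s - s - (i : ℝ)) * jbr p ^ (s - ((n - i + 1 : ℕ) : ℝ)) =
            jbr p ^ (-s - ((n + 1 : ℕ) : ℝ)) := by
          rw [← Real.rpow_add (jbr_pos p)]
          congr 1
          push_cast [Nat.cast_sub hin]
          ring
        calc (n.choose i : ℝ) * ‖iteratedFDeriv ℝ i (fun y => -(g y * g y)) p‖ *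
              ‖iteratedFDeriv ℝ (n - i) (fderiv ℝ f) p‖
            ≤ (n.choose i : ℝ) * ((2:ℝ) ^ i * B ^ 2 * jbr p ^ (-s - s - (i : ℝ))) *
              (A * jbr p ^ (s - ((n - i + 1 : ℕ) : ℝ))) := by
              refine mul_le_mul (mul_le_mul_of_nonneg_left (t1 ▸ t2) (by positivity))
                t3 (norm_nonneg _) ?_
              have : (0:ℝ) ≤ (2:ℝ) ^ i * B ^ 2 * jbr p ^ (-s - s - (i : ℝ)) := by
                have := Real.rpow_nonneg (jbr_pos p).le (-s - s - (i : ℝ))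
                positivity
              positivity
          _ = ((n.choose i : ℝ) * 2 ^ i * B ^ 2 * A) *
              (jbr p ^ (-s - s - (i : ℝ)) * jbr p ^ (s - ((n - i + 1 : ℕ) : ℝ))) := by ring
          _ = ((n.choose i : ℝ) * 2 ^ i * B ^ 2 * A) *
              jbr p ^ (-s - ((n + 1 : ℕ) : ℝ)) := by rw [hexp2]
      calc ∑ i ∈ Finset.range (n + 1), (n.choose i : ℝ) *
            ‖iteratedFDeriv ℝ i (fun y => -(g y * g y)) p‖ *
            ‖iteratedFDeriv ℝ (n - i) (fderiv ℝ f) p‖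
          ≤ ∑ i ∈ Finset.range (n + 1),
            ((n.choose i : ℝ) * 2 ^ i * B ^ 2 * A) * jbr p ^ (-s - ((n + 1 : ℕ) : ℝ)) :=
          Finset.sum_le_sum hterm
        _ = (∑ i ∈ Finset.range (n + 1), (n.choose i : ℝ) * 2 ^ i * B ^ 2 * A) *
            jbr p ^ (-s - ((n + 1 : ℕ) : ℝ)) := by rw [← Finset.sum_mul]

end Stmt4Aux

/-- For a symbol `h` of type `s` bounded below and `a ≥ -inf h + 1`, the function
`h_a = h + a` satisfies `h_a ≥ 1` pointwise; if moreover `s > 0` and `h` is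
elliptic, then the pointwise inverse `h_a⁻¹` is a symbol of type `-s`. -/
theorem stmt4 {N : ℕ} (s : ℝ) (h : EuclideanSpace ℝ (Fin N) → ℝ)
    (hsym : IsSymbol s h) (hbd : BddBelow (Set.range h))
    (a : ℝ) (ha : -sInf (Set.range h) + 1 ≤ a) :
    (∀ p, 1 ≤ h p + a) ∧
    ((0 < s ∧ ∃ R c : ℝ, 0 < c ∧ ∀ p, R ≤ ‖p‖ → c * jbr p ^ s ≤ h p) →
      IsSymbol (-s) (fun p => (h p + a)⁻¹)) := by
  have hone : ∀ p, 1 ≤ h p + a := by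
    intro p
    have := csInf_le hbd (Set.mem_range_self p)
    linarith
  refine ⟨hone, ?_⟩
  rintro ⟨hs, R, c, hc, hell⟩
  set f : EuclideanSpace ℝ (Fin N) → ℝ := fun p => h p + a with hfdef
  have hf : ContDiff ℝ (⊤ : ℕ∞) f := hsym.1.add contDiff_const
  -- derivative bounds for f with nonnegative constants
  have hA : ∀ n : ℕ, ∃ c' : ℝ, 0 ≤ c' ∧
      ∀ p, ‖iteratedFDeriv ℝ n f p‖ ≤ c' * jbr p ^ (s - (n : ℝ)) := by
    intro n
    obtain ⟨c₀, hc₀⟩ := hsym.2 n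
    refine ⟨max c₀ 0 + |a|, by positivity, fun p => ?_⟩
    have hX : (0:ℝ) ≤ jbr p ^ (s - (n : ℝ)) :=
      Real.rpow_nonneg (Stmt4Aux.jbr_pos p).le _
    match n with
    | 0 =>
      rw [norm_iteratedFDeriv_zero]
      have h0 := hc₀ p
      rw [norm_iteratedFDeriv_zero] at h0
      have hX1 : (1:ℝ) ≤ jbr p ^ (s - ((0:ℕ) : ℝ)) := by
        apply Real.one_le_rpow (Stmt4Aux.one_le_jbr p)
        push_cast; linarith
      have habs : ‖f p‖ ≤ ‖h p‖ + |a| := by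
        simp only [hfdef, Real.norm_eq_abs]
        exact abs_add_le _ _
      have h1 : ‖h p‖ ≤ (max c₀ 0) * jbr p ^ (s - ((0:ℕ) : ℝ)) :=
        h0.trans (mul_le_mul_of_nonneg_right (le_max_left _ _) hX)
      have h2 : |a| ≤ |a| * jbr p ^ (s - ((0:ℕ) : ℝ)) := by
        nlinarith [abs_nonneg a]
      calc ‖f p‖ ≤ ‖h p‖ + |a| := habs
        _ ≤ (max c₀ 0) * jbr p ^ (s - ((0:ℕ) : ℝ)) +
            |a| * jbr p ^ (s - ((0:ℕ) : ℝ)) := add_le_add h1 h2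
        _ = (max c₀ 0 + |a|) * jbr p ^ (s - ((0:ℕ) : ℝ)) := by ring
    | (m + 1) =>
      have heq : iteratedFDeriv ℝ (m + 1) f p = iteratedFDeriv ℝ (m + 1) h p := by
        have : f = h + (fun _ => a) := rfl
        rw [this, iteratedFDeriv_add_apply (hsym.1.of_le (by exact_mod_cast le_top)).contDiffAt contDiff_const.contDiffAt,
          iteratedFDeriv_const_of_ne (Nat.succ_ne_zero m)]
        simp
      rw [heq]
      refine (hc₀ p).trans ?_
      have : c₀ ≤ max c₀ 0 + |a| := by
        have := abs_nonneg a
        have := le_max_left c₀ 0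
        linarith
      exact mul_le_mul_of_nonneg_right this hX
  -- elliptic lower bound for f
  have hC : ∃ C : ℝ, 0 ≤ C ∧ ∀ p, jbr p ^ s ≤ C * f p := by
    set T : ℝ := max R ((2 * (|a| + 1) / c) ^ (1 / s)) with hTdef
    have hT0 : (0:ℝ) ≤ (2 * (|a| + 1) / c) ^ (1 / s) :=
      Real.rpow_nonneg (by positivity) _
    refine ⟨max (2 / c) (Real.sqrt (1 + T ^ 2) ^ s), by positivity, fun p => ?_⟩
    have hfp1 : 1 ≤ f p := hone p
    by_cases hp : T ≤ ‖p‖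
    · have hRp : R ≤ ‖p‖ := (le_max_left _ _).trans hp
      have h1 : c * jbr p ^ s ≤ h p := hell p hRp
      have h2 : 2 * (|a| + 1) / c ≤ jbr p ^ s := by
        have hb : (2 * (|a| + 1) / c) ^ (1 / s) ≤ jbr p :=
          (le_max_right _ _).trans (hp.trans (Stmt4Aux.norm_le_jbr p))
        have := Real.rpow_le_rpow hT0 hb hs.le
        rwa [← Real.rpow_mul (by positivity), one_div_mul_cancel hs.ne',
          Real.rpow_one] at this
      have h3 : c * (jbr p ^ s) ≤ 2 * (h p + a) := by
        have h2' : 2 * (|a| + 1) ≤ c * jbr p ^ s := by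
          rw [div_le_iff₀ hc] at h2
          linarith [mul_comm (jbr p ^ s) c]
        have := neg_abs_le a
        nlinarith
      have h4 : jbr p ^ s ≤ 2 / c * (h p + a) := by
        rw [div_mul_eq_mul_div, le_div_iff₀ hc]
        linarith [mul_comm (jbr p ^ s) c]
      refine h4.trans ?_
      have hfp0 : (0:ℝ) ≤ h p + a := by have := hone p; linarith
      exact mul_le_mul_of_nonneg_right (le_max_left _ _) hfp0
    · push_neg at hp
      have hj : jbr p ≤ Real.sqrt (1 + T ^ 2) := by
        apply Real.sqrt_le_sqrt
        nlinarith [norm_nonneg p]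
      have h1 : jbr p ^ s ≤ Real.sqrt (1 + T ^ 2) ^ s :=
        Real.rpow_le_rpow (Stmt4Aux.jbr_pos p).le hj hs.le
      have h2 : Real.sqrt (1 + T ^ 2) ^ s ≤
          max (2 / c) (Real.sqrt (1 + T ^ 2) ^ s) * f p := by
        have hM : (0:ℝ) ≤ max (2 / c) (Real.sqrt (1 + T ^ 2) ^ s) := by positivity
        calc Real.sqrt (1 + T ^ 2) ^ s
            ≤ max (2 / c) (Real.sqrt (1 + T ^ 2) ^ s) := le_max_right _ _
          _ = max (2 / c) (Real.sqrt (1 + T ^ 2) ^ s) * 1 := by ring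
          _ ≤ max (2 / c) (Real.sqrt (1 + T ^ 2) ^ s) * f p := by
              exact mul_le_mul_of_nonneg_left hfp1 hM
      exact h1.trans h2
  constructor
  · exact hf.inv fun p => by have := hone p; positivity
  · intro n
    obtain ⟨c', _, hb⟩ := Stmt4Aux.key s f hf hone hA hC n
    exact ⟨c', hb⟩
end

section
/- Let h : ℝ^N → ℝ be an elliptic symbol of type s > 0, i.e. smooth with |∂^α h(p)| ≤ c_α⟨p⟩^{s−|α|} and c⟨p⟩^s ≤ h(p) for |p| ≥ R. Then for every a ≥ −inf h + 1 there exist constants c₂, c₃ > 0, independent of a, such that (h(p−l) + a)^{−1} ≤ c₂ ⟨l⟩^s (a + c₃⟨p⟩^s)^{−1} for all p, l ∈ ℝ^N. -/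
open Filter

lemma one_le_jbr {N : ℕ} (p : EuclideanSpace ℝ (Fin N)) : 1 ≤ jbr p := by
  have h : (1:ℝ) ≤ 1 + ‖p‖ ^ 2 := by nlinarith [sq_nonneg ‖p‖]
  have := Real.sqrt_le_sqrt h
  simpa [jbr] using this

lemma jbr_pos {N : ℕ} (p : EuclideanSpace ℝ (Fin N)) : 0 < jbr p :=
  lt_of_lt_of_le one_pos (one_le_jbr p)

lemma one_le_jbr_rpow {N : ℕ} {s : ℝ} (hs : 0 ≤ s) (p : EuclideanSpace ℝ (Fin N)) :
    1 ≤ jbr p ^ s := by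
  calc (1:ℝ) = 1 ^ s := (Real.one_rpow s).symm
  _ ≤ jbr p ^ s := Real.rpow_le_rpow zero_le_one (one_le_jbr p) hs

lemma jbr_rpow_pos {N : ℕ} (s : ℝ) (p : EuclideanSpace ℝ (Fin N)) : 0 < jbr p ^ s :=
  Real.rpow_pos_of_pos (jbr_pos p) s

/-- Peetre's inequality. -/
lemma peetre {N : ℕ} {s : ℝ} (hs : 0 ≤ s) (p l : EuclideanSpace ℝ (Fin N)) :
    jbr p ^ s ≤ Real.sqrt 2 ^ s * jbr (p - l) ^ s * jbr l ^ s := by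
  have hb : jbr p ≤ Real.sqrt 2 * jbr (p - l) * jbr l := by
    have hnorm : ‖p‖ ≤ ‖p - l‖ + ‖l‖ := by
      calc ‖p‖ = ‖(p - l) + l‖ := by rw [sub_add_cancel]
      _ ≤ ‖p - l‖ + ‖l‖ := norm_add_le _ _
    have key : 1 + ‖p‖ ^ 2 ≤ 2 * ((1 + ‖p - l‖ ^ 2) * (1 + ‖l‖ ^ 2)) := by
      nlinarith [norm_nonneg p, norm_nonneg (p - l), norm_nonneg l,
        sq_nonneg (‖p - l‖ - ‖l‖), sq_nonneg (‖p - l‖ * ‖l‖)]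
    have : jbr p ≤ Real.sqrt (2 * ((1 + ‖p - l‖ ^ 2) * (1 + ‖l‖ ^ 2))) :=
      Real.sqrt_le_sqrt key
    calc jbr p ≤ Real.sqrt (2 * ((1 + ‖p - l‖ ^ 2) * (1 + ‖l‖ ^ 2))) := this
    _ = Real.sqrt 2 * (Real.sqrt (1 + ‖p - l‖ ^ 2) * Real.sqrt (1 + ‖l‖ ^ 2)) := by
        rw [Real.sqrt_mul (by norm_num), Real.sqrt_mul (by positivity)]
    _ = Real.sqrt 2 * jbr (p - l) * jbr l := by rw [jbr, jbr]; ring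
  calc jbr p ^ s ≤ (Real.sqrt 2 * jbr (p - l) * jbr l) ^ s :=
        Real.rpow_le_rpow (Real.sqrt_nonneg _) hb hs
  _ = Real.sqrt 2 ^ s * jbr (p - l) ^ s * jbr l ^ s := by
      rw [Real.mul_rpow (mul_nonneg (Real.sqrt_nonneg _) (jbr_pos _).le) (jbr_pos l).le,
        Real.mul_rpow (Real.sqrt_nonneg _) (jbr_pos _).le]

/-- For an elliptic symbol `h` of type `s > 0` there are constants `c₂, c₃ > 0`,
independent of `a ≥ -inf h + 1`, such that
`(h(p - l) + a)⁻¹ ≤ c₂ ⟨l⟩^s (a + c₃ ⟨p⟩^s)⁻¹` for all `p, l`. -/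
theorem stmt6 {N : ℕ} (s : ℝ) (hs : 0 < s) (h : EuclideanSpace ℝ (Fin N) → ℝ)
    (hsym : IsSymbol s h)
    (hell : ∃ R c : ℝ, 0 < c ∧ ∀ p, R ≤ ‖p‖ → c * jbr p ^ s ≤ h p) :
    ∃ c₂ : ℝ, 0 < c₂ ∧ ∃ c₃ : ℝ, 0 < c₃ ∧
      ∀ a : ℝ, -sInf (Set.range h) + 1 ≤ a →
        ∀ p l : EuclideanSpace ℝ (Fin N),
          (h (p - l) + a)⁻¹ ≤ c₂ * jbr l ^ s * (a + c₃ * jbr p ^ s)⁻¹ := by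
  obtain ⟨R, c, hc, hRc⟩ := hell
  set m := sInf (Set.range h) with hm_def
  -- h is bounded below
  obtain ⟨q₀, hq₀mem, hq₀⟩ :=
    (isCompact_closedBall (0 : EuclideanSpace ℝ (Fin N)) (max R 0)).exists_isMinOn
      ⟨0, Metric.mem_closedBall_self (le_max_right R 0)⟩ hsym.1.continuous.continuousOn
  have hbdd : ∀ q, min (h q₀) 0 ≤ h q := by
    intro q
    rcases le_or_gt ‖q‖ (max R 0) with hq | hq
    · exact le_trans (min_le_left _ _)
        (hq₀ (by simpa [Metric.mem_closedBall, dist_zero_right] using hq))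
    · have h1 : c * jbr q ^ s ≤ h q := hRc q (le_trans (le_max_left R 0) hq.le)
      have h2 : 0 < c * jbr q ^ s := mul_pos hc (jbr_rpow_pos s q)
      exact le_trans (min_le_right _ _) (by linarith)
  have hm : ∀ q, m ≤ h q := fun q =>
    csInf_le ⟨min (h q₀) 0, fun y ⟨x, hx⟩ => hx ▸ hbdd x⟩ ⟨q, rfl⟩
  set K : ℝ := 1 + max m 0 with hK_def
  set J : ℝ := Real.sqrt (1 + (max R 0) ^ 2) with hJ_def
  set C : ℝ := max (J ^ s) (K / c) with hC_def
  have hJ1 : 1 ≤ J := by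
    have h1 : (1:ℝ) ≤ 1 + (max R 0) ^ 2 := by nlinarith [sq_nonneg (max R 0)]
    have := Real.sqrt_le_sqrt h1
    simpa [hJ_def] using this
  have hC0 : 0 < C :=
    lt_of_lt_of_le (Real.rpow_pos_of_pos (lt_of_lt_of_le one_pos hJ1) s) (le_max_left _ _)
  -- the key elliptic bound: ⟨q⟩^s ≤ C (h q - m + 1)
  have hCb : ∀ q, jbr q ^ s ≤ C * (h q - m + 1) := by
    intro q
    have h1 : (1:ℝ) ≤ h q - m + 1 := by linarith [hm q]
    rcases le_or_gt ‖q‖ (max R 0) with hq | hq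
    · have hjq : jbr q ≤ J := by
        apply Real.sqrt_le_sqrt
        have : ‖q‖ ^ 2 ≤ (max R 0) ^ 2 := by
          apply pow_le_pow_left₀ (norm_nonneg q) hq
        linarith
      calc jbr q ^ s ≤ J ^ s := Real.rpow_le_rpow (jbr_pos q).le hjq hs.le
      _ ≤ C := le_max_left _ _
      _ ≤ C * (h q - m + 1) := le_mul_of_one_le_right hC0.le h1
    · have hhq : c * jbr q ^ s ≤ h q := hRc q (le_trans (le_max_left R 0) hq.le)
      have hKq : h q ≤ K * (h q - m + 1) := by
        have h2 : m ≤ max m 0 := le_max_left m 0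
        have h3 : (0:ℝ) ≤ max m 0 := le_max_right m 0
        nlinarith [hm q]
      have step : jbr q ^ s ≤ h q / c := (le_div_iff₀ hc).2 (by linarith)
      calc jbr q ^ s ≤ h q / c := step
      _ ≤ (K * (h q - m + 1)) / c := by gcongr
      _ = (K / c) * (h q - m + 1) := by ring
      _ ≤ C * (h q - m + 1) := mul_le_mul_of_nonneg_right (le_max_right _ _) (by linarith)
  have h2s : 0 < Real.sqrt 2 ^ s :=
    Real.rpow_pos_of_pos (Real.sqrt_pos.mpr two_pos) s
  set c₃ : ℝ := max 1 m with hc₃_def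
  have hc₃ : 0 < c₃ := lt_of_lt_of_le one_pos (le_max_left 1 m)
  set c₂ : ℝ := (1 + |m|) + c₃ * Real.sqrt 2 ^ s * C with hc₂_def
  have hc₂ : 0 < c₂ := by
    have := abs_nonneg m
    nlinarith [mul_pos (mul_pos hc₃ h2s) hC0]
  refine ⟨c₂, hc₂, c₃, hc₃, fun a ha p l => ?_⟩
  have hA1 : 1 ≤ h (p - l) + a := by linarith [hm (p - l)]
  have hA : 0 < h (p - l) + a := lt_of_lt_of_le one_pos hA1
  have hL1 : 1 ≤ jbr l ^ s := one_le_jbr_rpow hs.le l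
  have hP1 : 1 ≤ jbr p ^ s := one_le_jbr_rpow hs.le p
  have hY1 : 1 ≤ a + c₃ * jbr p ^ s := by
    have h1 : m ≤ c₃ := le_max_right 1 m
    nlinarith
  have hY : 0 < a + c₃ * jbr p ^ s := lt_of_lt_of_le one_pos hY1
  -- key inequality
  have hQ : jbr (p - l) ^ s ≤ C * (h (p - l) + a) := by
    have := hCb (p - l)
    have h2 : C * (h (p - l) - m + 1) ≤ C * (h (p - l) + a) := by
      apply mul_le_mul_of_nonneg_left _ hC0.le
      linarith
    linarith
  have hPee : jbr p ^ s ≤ Real.sqrt 2 ^ s * jbr (p - l) ^ s * jbr l ^ s := peetre hs.le p l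
  have hpart1 : c₃ * jbr p ^ s ≤
      c₃ * Real.sqrt 2 ^ s * C * (jbr l ^ s * (h (p - l) + a)) := by
    have t1 : c₃ * jbr p ^ s ≤ c₃ * (Real.sqrt 2 ^ s * jbr (p - l) ^ s * jbr l ^ s) :=
      mul_le_mul_of_nonneg_left hPee hc₃.le
    have t2 : c₃ * (Real.sqrt 2 ^ s * jbr (p - l) ^ s * jbr l ^ s) ≤
        c₃ * (Real.sqrt 2 ^ s * (C * (h (p - l) + a)) * jbr l ^ s) := by
      apply mul_le_mul_of_nonneg_left _ hc₃.le
      apply mul_le_mul_of_nonneg_right _ (jbr_rpow_pos s l).le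
      exact mul_le_mul_of_nonneg_left hQ h2s.le
    calc c₃ * jbr p ^ s ≤ c₃ * (Real.sqrt 2 ^ s * (C * (h (p - l) + a)) * jbr l ^ s) :=
          le_trans t1 t2
    _ = c₃ * Real.sqrt 2 ^ s * C * (jbr l ^ s * (h (p - l) + a)) := by ring
  have hpart2 : a ≤ (1 + |m|) * (jbr l ^ s * (h (p - l) + a)) := by
    have h1 : a ≤ (1 + |m|) * (h (p - l) + a) := by
      nlinarith [hm (p - l), neg_abs_le m, abs_nonneg m]
    have h2 : (1 + |m|) * (h (p - l) + a) ≤ (1 + |m|) * (jbr l ^ s * (h (p - l) + a)) := by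
      apply mul_le_mul_of_nonneg_left _ (by positivity)
      nlinarith
    linarith
  have key : a + c₃ * jbr p ^ s ≤ c₂ * jbr l ^ s * (h (p - l) + a) := by
    have : c₂ * jbr l ^ s * (h (p - l) + a) =
        (1 + |m|) * (jbr l ^ s * (h (p - l) + a)) +
          c₃ * Real.sqrt 2 ^ s * C * (jbr l ^ s * (h (p - l) + a)) := by
      rw [hc₂_def]; ring
    linarith
  rw [← one_div, ← div_eq_mul_inv, div_le_div_iff₀ hA hY]
  linarith
end

section
/- Let A : ℝ^N → ℝ^N be a continuous vector potential and for q, x ∈ ℝ^N define λ^A(q; x) := exp(−i Γ^A[q, q+x]), where Γ^A[q, q+x] = ∫₀¹ A(q + s x)·x ds is the circulation of A along the segment from q to q+x. Assume A is C¹ and set B_{jk} := ∂_j A_k − ∂_k A_j. Then for all q, x, y ∈ ℝ^N: λ^A(q; x) · λ^A(q+x; y) · λ^A(q; x+y)^{−1} = exp(−i Γ^B⟨q, q+x, q+x+y⟩), where Γ^B⟨q, q+x, q+x+y⟩ is the flux of B through the triangle with vertices q, q+x, q+x+y, given by the parametrized formula Γ^B⟨q,q+x,q+x+y⟩ = Σ_{j,k}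 x_j y_k ∫₀¹∫₀¹ s B_{jk}(q + s x + s t y) dt ds. -/
/-!
Pull the 1-form `⟪A, ·⟫` back along the parametrization `φ (s, t) = q + s • x + (s * t) • y`
of the triangle by the unit square. Green's theorem on the square, in the divergence form
`integral2_divergence_prod_of_hasFDerivAt` applied to `(⟪A ∘ φ, ∂ₜφ⟫, -⟪A ∘ φ, ∂ₛφ⟫)`, turns the
four boundary integrals into the three segment circulations (the edge `s = 0` is collapsed to
the point `q`), and the integrand into `s * (⟪DA x, y⟫ - ⟪DA y, x⟫)`, the `t`-terms cancelling.
In coordinates this curl form is `∑ⱼₖ xⱼ yₖ Bⱼₖ`.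
-/

open MeasureTheory Function
open scoped InnerProductSpace

theorem intervalIntegral.integral_integral_finsetSum {ι : Type*} (u : Finset ι)
    {f : ι → ℝ → ℝ → ℝ} (hf : ∀ i ∈ u, Continuous (uncurry (f i))) (a b c d : ℝ) :
    ∫ s in a..b, ∫ t in c..d, ∑ i ∈ u, f i s t = ∑ i ∈ u, ∫ s in a..b, ∫ t in c..d, f i s t := by
  rw [← intervalIntegral.integral_finsetSum fun i hi =>
    (continuous_parametric_intervalIntegral_of_continuous' (hf i hi) c d).intervalIntegrable a b]
  refine intervalIntegral.integral_congr fun s _ => intervalIntegral.integral_finsetSum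
    fun i hi => ?_
  exact ((hf i hi).comp (Continuous.prodMk_right s)).intervalIntegrable c d

theorem HasFDerivAt.apply_one_zero_eq {F : Type*} [NormedAddCommGroup F] [NormedSpace ℝ F]
    {f : ℝ × ℝ → F} {f' : ℝ × ℝ →L[ℝ] F} {s t : ℝ} {d : F} (hf : HasFDerivAt f f' (s, t))
    (hd : HasDerivAt (fun r => f (r, t)) d s) : f' (1, 0) = d :=
  (hf.comp_hasDerivAt s ((hasDerivAt_id s).prodMk (hasDerivAt_const s t))).unique hd

theorem HasFDerivAt.apply_zero_one_eq {F : Type*} [NormedAddCommGroup F] [NormedSpace ℝ F]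
    {f : ℝ × ℝ → F} {f' : ℝ × ℝ →L[ℝ] F} {s t : ℝ} {d : F} (hf : HasFDerivAt f f' (s, t))
    (hd : HasDerivAt (fun r => f (s, r)) d t) : f' (0, 1) = d :=
  (hf.comp_hasDerivAt t ((hasDerivAt_const t s).prodMk (hasDerivAt_id t))).unique hd

section Circulation

variable {E : Type*} [NormedAddCommGroup E] [InnerProductSpace ℝ E]

noncomputable def circulation (A : E → E) (q x : E) : ℝ :=
  ∫ s in (0:ℝ)..1, ⟪A (q + s • x), x⟫_ℝ

noncomputable def curlForm (A : E → E) (z x y : E) : ℝ :=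
  ⟪fderiv ℝ A z x, y⟫_ℝ - ⟪fderiv ℝ A z y, x⟫_ℝ

theorem hasDerivAt_inner_comp {A : E → E} {c v : ℝ → E} {c' v' : E} {r : ℝ}
    (hA : DifferentiableAt ℝ A (c r)) (hc : HasDerivAt c c' r) (hv : HasDerivAt v v' r) :
    HasDerivAt (fun r => ⟪A (c r), v r⟫_ℝ) (⟪A (c r), v'⟫_ℝ + ⟪fderiv ℝ A (c r) c', v r⟫_ℝ) r :=
  (hA.hasFDerivAt.comp_hasDerivAt r hc).inner ℝ hv

theorem circulation_add_sub_circulation_eq_integral_curlForm {A : E → E} (hA : ContDiff ℝ 1 A)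
    (q x y : E) :
    circulation A q x + circulation A (q + x) y - circulation A q (x + y) =
      ∫ s in (0:ℝ)..1, ∫ t in (0:ℝ)..1, s * curlForm A (q + s • x + (s * t) • y) x y := by
  have hAd : Differentiable ℝ A := hA.differentiable one_ne_zero
  have hAc : Continuous A := hA.continuous
  have hDAc : Continuous (fderiv ℝ A) := hA.continuous_fderiv one_ne_zero
  set φ : ℝ × ℝ → E := fun p => q + p.1 • x + (p.1 * p.2) • y with hφ
  set f : ℝ × ℝ → ℝ := fun p => ⟪A (φ p), p.1 • y⟫_ℝ with hf
  set g : ℝ × ℝ → ℝ := fun p => -⟪A (φ p), x + p.2 • y⟫_ℝ with hg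
  have hφs (s t : ℝ) : HasDerivAt (fun r => φ (r, t)) (x + t • y) s :=
    ((((hasDerivAt_id s).smul_const x).const_add q).add
      (((hasDerivAt_id s).mul_const t).smul_const y)).congr_deriv (by simp)
  have hφt (s t : ℝ) : HasDerivAt (fun r => φ (s, r)) (s • y) t :=
    ((((hasDerivAt_id t).const_mul s).smul_const y).const_add (q + s • x)).congr_deriv
      (by simp)
  have hfd : Differentiable ℝ f := fun p =>
    (hAd _).comp p (by fun_prop) |>.inner ℝ (by fun_prop)
  have hgd : Differentiable ℝ g := fun p =>
    ((hAd _).comp p (by fun_prop) |>.inner ℝ (by fun_prop)).neg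
  have hdiv (p : ℝ × ℝ) :
      fderiv ℝ f p (1, 0) + fderiv ℝ g p (0, 1) = p.1 * curlForm A (φ p) x y := by
    obtain ⟨s, t⟩ := p
    rw [(hfd _).hasFDerivAt.apply_one_zero_eq
        (hasDerivAt_inner_comp (hAd _) (hφs s t) ((hasDerivAt_id s).smul_const y)),
      (hgd _).hasFDerivAt.apply_zero_one_eq
        (hasDerivAt_inner_comp (hAd _) (hφt s t)
          (((hasDerivAt_id t).smul_const y).const_add x)).neg]
    simp only [curlForm, map_add, map_smul, inner_add_left, inner_add_right,
      real_inner_smul_left, real_inner_smul_right, one_smul, id]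
    ring
  have green := integral2_divergence_prod_of_hasFDerivAt f g (fderiv ℝ f) (fderiv ℝ g) 0 0 1 1
    (by fun_prop) (by fun_prop) (fun p _ => (hfd p).hasFDerivAt) (fun p _ => (hgd p).hasFDerivAt)
    (by
      simp only [hdiv]
      exact ContinuousOn.integrableOn_compact (isCompact_uIcc.prod isCompact_uIcc)
        (by unfold curlForm; fun_prop))
  simp only [hdiv] at green
  rw [green]
  simp only [circulation, hf, hg, hφ, intervalIntegral.integral_neg, intervalIntegral.integral_zero,
    inner_zero_right, smul_add, add_assoc, mul_one, one_mul, mul_zero, zero_mul, one_smul,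
    zero_smul, add_zero, sub_zero, sub_neg_eq_add]
  ring

end Circulation

theorem fderiv_euclideanSpace_apply {F ι : Type*} [NormedAddCommGroup F] [NormedSpace ℝ F]
    [Fintype ι] {A : F → EuclideanSpace ℝ ι} {z : F} (hA : DifferentiableAt ℝ A z) (i : ι)
    (v : F) : fderiv ℝ (fun w => A w i) z v = fderiv ℝ A z v i := by
  exact DFunLike.congr_fun ((PiLp.hasFDerivAt_apply 2 (A z) i).comp z hA.hasFDerivAt).fderiv v

theorem EuclideanSpace.inner_apply_eq_sum_sum {ι κ : Type*} [Fintype ι] [DecidableEq ι]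
    [Fintype κ] (L : EuclideanSpace ℝ ι →L[ℝ] EuclideanSpace ℝ κ) (u : EuclideanSpace ℝ ι)
    (v : EuclideanSpace ℝ κ) :
    ⟪L u, v⟫_ℝ = ∑ j, ∑ k, u j * v k * L (EuclideanSpace.single j 1) k := by
  conv_lhs => rw [← (EuclideanSpace.basisFun ι ℝ).sum_repr u]
  simp only [EuclideanSpace.basisFun_repr, EuclideanSpace.basisFun_apply, map_sum, map_smul,
    PiLp.inner_apply, WithLp.ofLp_sum, WithLp.ofLp_smul, Finset.sum_apply, Pi.smul_apply,
    smul_eq_mul, RCLike.inner_apply, conj_trivial, Finset.mul_sum]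
  rw [Finset.sum_comm]
  exact Finset.sum_congr rfl fun j _ => Finset.sum_congr rfl fun k _ => by ring

theorem curlForm_eq_sum_sum {ι : Type*} [Fintype ι] [DecidableEq ι]
    {A : EuclideanSpace ℝ ι → EuclideanSpace ℝ ι} {z : EuclideanSpace ℝ ι}
    (hA : DifferentiableAt ℝ A z) (x y : EuclideanSpace ℝ ι) :
    curlForm A z x y = ∑ j, ∑ k, x j * y k *
      (fderiv ℝ (fun w => A w k) z (EuclideanSpace.single j 1)
        - fderiv ℝ (fun w => A w j) z (EuclideanSpace.single k 1)) := by
  simp only [curlForm, fderiv_euclideanSpace_apply hA, EuclideanSpace.inner_apply_eq_sum_sum,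
    mul_sub, Finset.sum_sub_distrib]
  congr 1
  rw [Finset.sum_comm]
  exact Finset.sum_congr rfl fun j _ => Finset.sum_congr rfl fun k _ => by ring

/-- Stokes identity for the magnetic phases: if `A` is a `C¹` vector potential,
`λ^A(q; x) = exp(-i Γ^A[q, q+x])` with `Γ^A` the circulation of `A` along a
segment, and `B_{jk} = ∂ⱼA_k - ∂_kA_j`, then
`λ^A(q;x) λ^A(q+x;y) λ^A(q;x+y)⁻¹ = exp(-i Γ^B⟨q, q+x, q+x+y⟩)` where `Γ^B` is
the flux of `B` through the triangle, given by a parametrized double integral. -/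
theorem stmt13 {N : ℕ} (A : EuclideanSpace ℝ (Fin N) → EuclideanSpace ℝ (Fin N))
    (hA : ContDiff ℝ 1 A)
    (lam : EuclideanSpace ℝ (Fin N) → EuclideanSpace ℝ (Fin N) → ℂ)
    (hlam : ∀ q x, lam q x =
      Complex.exp (-Complex.I *
        ((∫ s in (0:ℝ)..1, (inner ℝ (A (q + s • x)) x : ℝ)) : ℝ)))
    (B : Fin N → Fin N → EuclideanSpace ℝ (Fin N) → ℝ)
    (hB : ∀ j k q, B j k q =
      fderiv ℝ (fun z => A z k) q (EuclideanSpace.single j 1)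
        - fderiv ℝ (fun z => A z j) q (EuclideanSpace.single k 1)) :
    ∀ q x y : EuclideanSpace ℝ (Fin N),
      lam q x * lam (q + x) y * (lam q (x + y))⁻¹ =
        Complex.exp (-Complex.I *
          ((∑ j : Fin N, ∑ k : Fin N, x j * y k *
            ∫ s in (0:ℝ)..1, ∫ τ in (0:ℝ)..1,
              s * B j k (q + s • x + (s * τ) • y)) : ℝ)) := by
  intro q x y
  have hAd : Differentiable ℝ A := hA.differentiable one_ne_zero
  have hDAc : Continuous (fderiv ℝ A) := hA.continuous_fderiv one_ne_zero
  have hBc (j k : Fin N) : Continuous (B j k) := by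
    simp only [funext (hB j k), fderiv_euclideanSpace_apply (hAd _)]
    fun_prop
  have flux : (∑ j, ∑ k, x j * y k * ∫ s in (0:ℝ)..1, ∫ τ in (0:ℝ)..1,
        s * B j k (q + s • x + (s * τ) • y)) =
      ∫ s in (0:ℝ)..1, ∫ τ in (0:ℝ)..1, s * curlForm A (q + s • x + (s * τ) • y) x y := by
    simp only [curlForm_eq_sum_sum (hAd _), ← hB, Finset.mul_sum,
      ← intervalIntegral.integral_const_mul]
    rw [intervalIntegral.integral_integral_finsetSum _ fun j _ => by fun_prop]
    refine Finset.sum_congr rfl fun j _ => ?_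
    rw [intervalIntegral.integral_integral_finsetSum _ fun k _ => by fun_prop]
    refine Finset.sum_congr rfl fun k _ => ?_
    simp only [mul_left_comm]
  rw [hlam, hlam, hlam, ← Complex.exp_neg, ← Complex.exp_add, ← Complex.exp_add, flux,
    ← circulation_add_sub_circulation_eq_integral_curlForm hA]
  congr 1
  simp only [circulation]
  push_cast
  ring
end

section
/- Let B be a magnetic field on ℝ^N whose components B_{jk} are bounded smooth functions with all derivatives bounded, and define γ^B(q; x, y) := exp(−i Σ_{j,k} x_j y_k ∫₀¹∫₀¹ s B_{jk}(q − x/2 − y/2 + s x + s t (y − x)) dt ds). Then for every pair of multi-indices α, β there exist c > 0 and s₁, s₂ ≥ 0 such that |∂_x^α ∂_y^β γ^B(q; x, y)| ≤ c ⟨x⟩^{s₁} ⟨y⟩^{s₂} for all q, x, y ∈ ℝ^N. -/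
open Filter

/-- The phase factor `γ^B(q; x, y)` of the magnetic Moyal product. -/
noncomputable def gammaB {N : ℕ} (B : Fin N → Fin N → EuclideanSpace ℝ (Fin N) → ℝ)
    (q x y : EuclideanSpace ℝ (Fin N)) : ℂ :=
  Complex.exp (-Complex.I *
    ((∑ j : Fin N, ∑ k : Fin N, x j * y k *
      ∫ s in (0:ℝ)..1, ∫ τ in (0:ℝ)..1,
        s * B j k (q - (1/2 : ℝ) • x - (1/2 : ℝ) • y + s • x + (s * τ) • (y - x))) : ℝ))

section MagAux

open MeasureTheory
set_option maxHeartbeats 1000000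

private lemma jbr_one_le {N : ℕ} (x : EuclideanSpace ℝ (Fin N)) : 1 ≤ jbr x := by
  have h1 : (1:ℝ) = Real.sqrt 1 := Real.sqrt_one.symm
  rw [jbr, h1]
  exact Real.sqrt_le_sqrt (by nlinarith [sq_nonneg ‖x‖])

private lemma jbr_nonneg {N : ℕ} (x : EuclideanSpace ℝ (Fin N)) : 0 ≤ jbr x :=
  le_trans zero_le_one (jbr_one_le x)

private lemma jbr_add_le {N : ℕ} (x : EuclideanSpace ℝ (Fin N)) : 1 + ‖x‖ ≤ 2 * jbr x := by
  have ha := norm_nonneg x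
  have h1 : 1 + ‖x‖ = Real.sqrt ((1+‖x‖)^2) := (Real.sqrt_sq (by positivity)).symm
  have h2 : 2 * jbr x = Real.sqrt (4 * (1+‖x‖^2)) := by
    rw [jbr, show (4:ℝ) = 2^2 by norm_num, Real.sqrt_mul (by positivity),
      Real.sqrt_sq (by norm_num)]
  rw [h1, h2]
  exact Real.sqrt_le_sqrt (by nlinarith [sq_nonneg (‖x‖ - 1)])


private lemma affine_ifd' {E F : Type*} [NormedAddCommGroup E] [NormedSpace ℝ E]
    [NormedAddCommGroup F] [NormedSpace ℝ F] (L : E →L[ℝ] F) (c : F) :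
    (∀ v, ‖iteratedFDeriv ℝ 1 (fun w => c + L w) v‖ = ‖L‖) ∧
    (∀ i, 2 ≤ i → ∀ v : E, ‖iteratedFDeriv ℝ i (fun w => c + L w) v‖ = 0) := by
  have hfd : (fderiv ℝ (fun w => c + L w)) = fun _ : E => L := by
    funext v; rw [fderiv_const_add]; exact L.fderiv
  constructor
  · intro v
    have h0 := norm_iteratedFDeriv_fderiv (𝕜 := ℝ) (f := fun w => c + L w) (n := 0) (x := v)
    rw [← h0, hfd, norm_iteratedFDeriv_zero]
  · intro i hi v
    obtain ⟨m, rfl⟩ := Nat.exists_eq_add_of_le hi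
    have h0 := norm_iteratedFDeriv_fderiv (𝕜 := ℝ) (f := fun w => c + L w) (n := 1 + m) (x := v)
    have h1 : (2 + m) = (1 + m) + 1 := by omega
    rw [h1, ← h0, hfd, iteratedFDeriv_const_of_ne (by omega)]
    simp

private lemma clm_ifd_le {E : Type*} [NormedAddCommGroup E] [NormedSpace ℝ E]
    (L : E →L[ℝ] ℝ) (i : ℕ) (v : E) :
    ‖iteratedFDeriv ℝ i (fun w => L w) v‖ ≤ ‖L‖ * (1 + ‖v‖) := by
  have h0 : (fun w => L w) = fun w => (0:ℝ) + L w := by funext w; rw [zero_add]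
  have hLnn := norm_nonneg L
  have hvnn := norm_nonneg v
  match i with
  | 0 =>
    rw [norm_iteratedFDeriv_zero]
    calc ‖L v‖ ≤ ‖L‖ * ‖v‖ := L.le_opNorm v
      _ ≤ ‖L‖ * (1 + ‖v‖) := by nlinarith
  | 1 => rw [h0, (affine_ifd' L 0).1 v]; nlinarith
  | (m+2) => rw [h0, (affine_ifd' L (0:ℝ)).2 (m+2) (by omega) v]; positivity

private lemma term_ifd_bound {E : Type*} [NormedAddCommGroup E] [NormedSpace ℝ E]
    (L₁ L₂ : E →L[ℝ] ℝ) (I : E → ℝ) (hI : ∀ k : ℕ, ContDiff ℝ k I) (n : ℕ) (CI : ℝ)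
    (hCI : 0 ≤ CI) (hIb : ∀ i, i ≤ n → ∀ v, ‖iteratedFDeriv ℝ i I v‖ ≤ CI) (v : E) :
    ‖iteratedFDeriv ℝ n (fun w => L₁ w * (L₂ w * I w)) v‖ ≤
      4^n * (‖L₁‖+1) * (‖L₂‖+1) * CI * (1 + ‖v‖)^2 := by
  have hvnn : (0:ℝ) ≤ 1 + ‖v‖ := by positivity
  have hL1 := norm_nonneg L₁
  have hL2 := norm_nonneg L₂
  have hinner : ∀ m, m ≤ n → ∀ w : E, ‖iteratedFDeriv ℝ m (fun u => L₂ u * I u) w‖ ≤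
      2^n * (‖L₂‖+1) * CI * (1 + ‖w‖) := by
    intro m hm w
    have hwnn : (0:ℝ) ≤ 1 + ‖w‖ := by positivity
    refine (norm_iteratedFDeriv_mul_le (N := (m : WithTop ℕ∞)) L₂.contDiff (hI m) w le_rfl).trans ?_
    calc ∑ i ∈ Finset.range (m + 1), (m.choose i : ℝ) * ‖iteratedFDeriv ℝ i (fun u => L₂ u) w‖ *
          ‖iteratedFDeriv ℝ (m - i) I w‖
        ≤ ∑ i ∈ Finset.range (m + 1), (m.choose i : ℝ) * ((‖L₂‖+1) * (1 + ‖w‖)) * CI := by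
          apply Finset.sum_le_sum
          intro i _
          have hc : (0:ℝ) ≤ (m.choose i : ℝ) := by positivity
          have h1 : ‖iteratedFDeriv ℝ i (fun u => L₂ u) w‖ ≤ (‖L₂‖+1) * (1 + ‖w‖) :=
            (clm_ifd_le L₂ i w).trans (by nlinarith)
          have h2 : ‖iteratedFDeriv ℝ (m - i) I w‖ ≤ CI := hIb _ (by omega) w
          have := mul_le_mul (mul_le_mul le_rfl h1 (norm_nonneg _) hc) h2 (norm_nonneg _)
            (by positivity)
          simpa using this
      _ = (∑ i ∈ Finset.range (m + 1), (m.choose i : ℝ)) * ((‖L₂‖+1) * (1 + ‖w‖)) * CI := by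
          rw [← Finset.sum_mul, ← Finset.sum_mul]
      _ = (2:ℝ)^m * ((‖L₂‖+1) * (1 + ‖w‖)) * CI := by
          congr 2
          exact_mod_cast Nat.sum_range_choose m
      _ = (2:ℝ)^m * (‖L₂‖+1) * CI * (1 + ‖w‖) := by ring
      _ ≤ (2:ℝ)^n * (‖L₂‖+1) * CI * (1 + ‖w‖) := by gcongr <;> norm_num
  refine (norm_iteratedFDeriv_mul_le (N := (n : WithTop ℕ∞)) L₁.contDiff
    (L₂.contDiff.mul (hI n)) v le_rfl).trans ?_
  calc ∑ i ∈ Finset.range (n + 1), (n.choose i : ℝ) * ‖iteratedFDeriv ℝ i (fun u => L₁ u) v‖ *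
        ‖iteratedFDeriv ℝ (n - i) (fun u => L₂ u * I u) v‖
      ≤ ∑ i ∈ Finset.range (n + 1), (n.choose i : ℝ) * ((‖L₁‖+1) * (1 + ‖v‖)) *
        (2^n * (‖L₂‖+1) * CI * (1 + ‖v‖)) := by
        apply Finset.sum_le_sum
        intro i _
        have hc : (0:ℝ) ≤ (n.choose i : ℝ) := by positivity
        have h1 : ‖iteratedFDeriv ℝ i (fun u => L₁ u) v‖ ≤ (‖L₁‖+1) * (1 + ‖v‖) :=
          (clm_ifd_le L₁ i v).trans (by nlinarith)
        have h2 := hinner (n - i) (by omega) v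
        have := mul_le_mul (mul_le_mul le_rfl h1 (norm_nonneg _) hc) h2 (norm_nonneg _)
          (by positivity)
        simpa using this
    _ = (∑ i ∈ Finset.range (n + 1), (n.choose i : ℝ)) * ((‖L₁‖+1) * (1 + ‖v‖)) *
        (2^n * (‖L₂‖+1) * CI * (1 + ‖v‖)) := by
        rw [← Finset.sum_mul, ← Finset.sum_mul]
    _ = (2:ℝ)^n * ((‖L₁‖+1) * (1 + ‖v‖)) * (2^n * (‖L₂‖+1) * CI * (1 + ‖v‖)) := by
        congr 2
        exact_mod_cast Nat.sum_range_choose n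
    _ = 4^n * (‖L₁‖+1) * (‖L₂‖+1) * CI * (1 + ‖v‖)^2 := by
        rw [show (4:ℝ) = 2*2 by norm_num, mul_pow]
        ring


lemma pairCLM_norm_le {E : Type*} [NormedAddCommGroup E] [NormedSpace ℝ E] (a b : ℝ) :
    ‖a • ContinuousLinearMap.fst ℝ E E + b • ContinuousLinearMap.snd ℝ E E‖ ≤ |a| + |b| := by
  apply ContinuousLinearMap.opNorm_le_bound _ (by positivity)
  intro w
  calc ‖(a • ContinuousLinearMap.fst ℝ E E + b • ContinuousLinearMap.snd ℝ E E) w‖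
      = ‖a • w.1 + b • w.2‖ := by simp
    _ ≤ ‖a • w.1‖ + ‖b • w.2‖ := norm_add_le _ _
    _ = |a| * ‖w.1‖ + |b| * ‖w.2‖ := by rw [norm_smul, norm_smul]; rfl
    _ ≤ |a| * ‖w‖ + |b| * ‖w‖ := by
        gcongr
        · exact norm_fst_le w
        · exact norm_snd_le w
    _ = (|a| + |b|) * ‖w‖ := by ring

lemma pairCLM_apply {E : Type*} [NormedAddCommGroup E] [NormedSpace ℝ E] (a b : ℝ) (w : E × E) :
    (a • ContinuousLinearMap.fst ℝ E E + b • ContinuousLinearMap.snd ℝ E E) w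
      = a • w.1 + b • w.2 := by simp

private lemma affine_ifd {E F : Type*} [NormedAddCommGroup E] [NormedSpace ℝ E]
    [NormedAddCommGroup F] [NormedSpace ℝ F] (L : E →L[ℝ] F) (c : F) :
    (∀ v, ‖iteratedFDeriv ℝ 1 (fun w => c + L w) v‖ = ‖L‖) ∧
    (∀ i, 2 ≤ i → ∀ v : E, ‖iteratedFDeriv ℝ i (fun w => c + L w) v‖ = 0) := by
  have hfd : (fderiv ℝ (fun w => c + L w)) = fun _ : E => L := by
    funext v
    rw [fderiv_const_add]
    exact L.fderiv
  constructor
  · intro v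
    have h0 := norm_iteratedFDeriv_fderiv (𝕜 := ℝ) (f := fun w => c + L w) (n := 0) (x := v)
    rw [← h0, hfd, norm_iteratedFDeriv_zero]
  · intro i hi v
    obtain ⟨m, rfl⟩ := Nat.exists_eq_add_of_le hi
    have h0 := norm_iteratedFDeriv_fderiv (𝕜 := ℝ) (f := fun w => c + L w) (n := 1 + m) (x := v)
    have h1 : (2 + m) = (1 + m) + 1 := by omega
    rw [h1, ← h0, hfd, iteratedFDeriv_const_of_ne (by omega)]
    simp

noncomputable def magMu : Measure (ℝ × ℝ) :=
  (volume.restrict (Set.Ioc (0:ℝ) 1)).prod (volume.restrict (Set.Ioc (0:ℝ) 1))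

instance : IsFiniteMeasure (volume.restrict (Set.Ioc (0:ℝ) 1)) := by
  constructor; simp [Real.volume_Ioc]

instance : IsFiniteMeasure magMu := by
  unfold magMu; infer_instance

noncomputable def magF {N : ℕ} (q : EuclideanSpace ℝ (Fin N)) (b : EuclideanSpace ℝ (Fin N) → ℝ)
    (p : ℝ × ℝ) (v : EuclideanSpace ℝ (Fin N) × EuclideanSpace ℝ (Fin N)) : ℝ :=
  p.1 * b (q - (1/2 : ℝ) • v.1 - (1/2 : ℝ) • v.2 + p.1 • v.1 + (p.1 * p.2) • (v.2 - v.1))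

lemma magMu_ae : ∀ᵐ p ∂magMu, p ∈ Set.Ioc (0:ℝ) 1 ×ˢ Set.Ioc (0:ℝ) 1 := by
  rw [magMu, Measure.prod_restrict]
  exact ae_restrict_mem (measurableSet_Ioc.prod measurableSet_Ioc)

lemma magF_smooth {N : ℕ} (q : EuclideanSpace ℝ (Fin N)) (b : EuclideanSpace ℝ (Fin N) → ℝ)
    (hb : ∀ k : ℕ, ContDiff ℝ k b) (k : ℕ) :
    ContDiff ℝ k (fun pv : (ℝ × ℝ) × (EuclideanSpace ℝ (Fin N) × EuclideanSpace ℝ (Fin N)) =>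
      magF q b pv.1 pv.2) := by
  unfold magF
  have hbk := hb k
  fun_prop

lemma magF_bound {N : ℕ} (b : EuclideanSpace ℝ (Fin N) → ℝ)
    (hb : ∀ k : ℕ, ContDiff ℝ k b)
    (hbdd : ∀ n : ℕ, ∃ c : ℝ, ∀ x, ‖iteratedFDeriv ℝ n b x‖ ≤ c) (m : ℕ) :
    ∃ C : ℝ, 0 ≤ C ∧ ∀ q : EuclideanSpace ℝ (Fin N), ∀ᵐ p ∂magMu, ∀ v,
      ‖iteratedFDeriv ℝ m (fun w => magF q b p w) v‖ ≤ C := by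
  classical
  choose c hc using hbdd
  set CB : ℝ := ∑ i ∈ Finset.range (m+1), |c i| with hCBdef
  have hCBnn : 0 ≤ CB := Finset.sum_nonneg fun _ _ => abs_nonneg _
  have hCB : ∀ i, i ≤ m → ∀ x, ‖iteratedFDeriv ℝ i b x‖ ≤ CB := by
    intro i hi x
    refine (hc i x).trans ((le_abs_self _).trans ?_)
    exact Finset.single_le_sum (f := fun i => |c i|) (fun _ _ => abs_nonneg _)
      (Finset.mem_range.2 (by omega))
  refine ⟨(Nat.factorial m : ℝ) * CB * 8 ^ m, by positivity, fun q => ?_⟩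
  filter_upwards [magMu_ae] with p hp v
  obtain ⟨⟨h01, h11⟩, h02, h12⟩ := hp
  set L : (EuclideanSpace ℝ (Fin N) × EuclideanSpace ℝ (Fin N)) →L[ℝ] EuclideanSpace ℝ (Fin N) :=
    (p.1 - p.1 * p.2 - 1/2) • (ContinuousLinearMap.fst ℝ (EuclideanSpace ℝ (Fin N)) (EuclideanSpace ℝ (Fin N))) +
    (p.1 * p.2 - 1/2) • (ContinuousLinearMap.snd ℝ (EuclideanSpace ℝ (Fin N)) (EuclideanSpace ℝ (Fin N))) with hLdef
  have ha : |p.1 - p.1 * p.2 - 1/2| ≤ 4 := by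
    rw [abs_le]; constructor <;> nlinarith
  have hb2 : |p.1 * p.2 - 1/2| ≤ 4 := by
    rw [abs_le]; constructor <;> nlinarith
  have hL8 : ‖L‖ ≤ 8 := by
    refine (pairCLM_norm_le _ _).trans ?_
    linarith
  have heq : (fun w => magF q b p w) = fun w => p.1 • ((b ∘ (fun w => q + L w)) w) := by
    funext w
    simp only [magF, Function.comp_apply, smul_eq_mul, hLdef, pairCLM_apply]
    congr 1
    congr 1
    module
  have hcomp : ContDiff ℝ m (b ∘ (fun w : EuclideanSpace ℝ (Fin N) × EuclideanSpace ℝ (Fin N) => q + L w)) :=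
    (hb m).comp (contDiff_const.add L.contDiff)
  rw [heq, iteratedFDeriv_const_smul_apply' hcomp.contDiffAt]
  refine (norm_smul_le p.1 (iteratedFDeriv ℝ m (b ∘ fun w : EuclideanSpace ℝ (Fin N) × EuclideanSpace ℝ (Fin N) => q + L w) v)).trans ?_
  have h8 : ‖iteratedFDeriv ℝ m (b ∘ fun w : EuclideanSpace ℝ (Fin N) × EuclideanSpace ℝ (Fin N) => q + L w) v‖
      ≤ (Nat.factorial m : ℝ) * CB * 8 ^ m := by
    apply norm_iteratedFDeriv_comp_le (hb m) (contDiff_const.add L.contDiff) le_rfl v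
    · intro i hi
      exact hCB i hi _
    · intro i h1i him
      match i, h1i with
      | 1, _ => rw [(affine_ifd L q).1 v]; simpa using hL8
      | (i+2), _ => rw [(affine_ifd L q).2 (i+2) (by omega) v]; positivity
  calc ‖p.1‖ * ‖iteratedFDeriv ℝ m (b ∘ fun w : EuclideanSpace ℝ (Fin N) × EuclideanSpace ℝ (Fin N) => q + L w) v‖
      ≤ 1 * ((Nat.factorial m : ℝ) * CB * 8 ^ m) := by
        apply mul_le_mul _ h8 (norm_nonneg _) zero_le_one
        rw [Real.norm_eq_abs, abs_of_pos h01]; exact h11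
    _ = (Nat.factorial m : ℝ) * CB * 8 ^ m := one_mul _

lemma magF_integral_eq {N : ℕ} (q : EuclideanSpace ℝ (Fin N)) (b : EuclideanSpace ℝ (Fin N) → ℝ)
    (hb : Continuous b) (Cb : ℝ) (hCb : ∀ x, ‖b x‖ ≤ Cb)
    (v : EuclideanSpace ℝ (Fin N) × EuclideanSpace ℝ (Fin N)) :
    (∫ s in (0:ℝ)..1, ∫ τ in (0:ℝ)..1,
        s * b (q - (1/2 : ℝ) • v.1 - (1/2 : ℝ) • v.2 + s • v.1 + (s * τ) • (v.2 - v.1)))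
      = ∫ p, magF q b p v ∂magMu := by
  have hInt : Integrable (fun p : ℝ × ℝ => magF q b p v) magMu := by
    apply Integrable.mono' (integrable_const Cb)
    · apply Continuous.aestronglyMeasurable
      unfold magF
      fun_prop
    · filter_upwards [magMu_ae] with p hp
      obtain ⟨⟨h01, h11⟩, _⟩ := hp
      have h2 : ‖b (q - (1/2 : ℝ) • v.1 - (1/2 : ℝ) • v.2 + p.1 • v.1
          + (p.1 * p.2) • (v.2 - v.1))‖ ≤ Cb := hCb _
      have h3 : |p.1| ≤ 1 := by rw [abs_of_pos h01]; exact h11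
      calc ‖magF q b p v‖ = |p.1| * ‖b _‖ := by rw [magF, norm_mul]; rfl
        _ ≤ 1 * Cb := mul_le_mul h3 h2 (norm_nonneg _) zero_le_one
        _ = Cb := one_mul _
  rw [intervalIntegral.integral_of_le zero_le_one]
  have hin : ∀ s : ℝ, (∫ τ in (0:ℝ)..1,
      s * b (q - (1/2 : ℝ) • v.1 - (1/2 : ℝ) • v.2 + s • v.1 + (s * τ) • (v.2 - v.1)))
      = ∫ τ in Set.Ioc (0:ℝ) 1,
      s * b (q - (1/2 : ℝ) • v.1 - (1/2 : ℝ) • v.2 + s • v.1 + (s * τ) • (v.2 - v.1)) :=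
    fun s => intervalIntegral.integral_of_le zero_le_one
  simp_rw [hin]
  rw [MeasureTheory.integral_integral (f := fun s τ =>
    s * b (q - (1/2 : ℝ) • v.1 - (1/2 : ℝ) • v.2 + s • v.1 + (s * τ) • (v.2 - v.1)))
    (by exact hInt)]
  rfl


private lemma param_key {E : Type} [NormedAddCommGroup E] [NormedSpace ℝ E]
    (μ : Measure (ℝ × ℝ)) [IsFiniteMeasure μ] :
    ∀ (n : ℕ) {G : Type} [NormedAddCommGroup G] [NormedSpace ℝ G] [CompleteSpace G]
      (F : (ℝ × ℝ) → E → G),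
      (∀ k : ℕ, ContDiff ℝ k (fun pv : (ℝ × ℝ) × E => F pv.1 pv.2)) →
      (∀ m : ℕ, ∃ C : ℝ, ∀ᵐ p ∂μ, ∀ v, ‖iteratedFDeriv ℝ m (F p) v‖ ≤ C) →
      ContDiff ℝ n (fun v => ∫ p, F p v ∂μ) ∧
      ∀ C : ℝ, (∀ᵐ p ∂μ, ∀ v, ‖iteratedFDeriv ℝ n (F p) v‖ ≤ C) →
        ∀ v, ‖iteratedFDeriv ℝ n (fun w => ∫ p, F p w ∂μ) v‖ ≤ C * (μ Set.univ).toReal := by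
  intro n
  induction n with
  | zero =>
    intro G _ _ _ F hF hbdd
    have hslice : ∀ (k : ℕ) p, ContDiff ℝ k (F p) := fun k p =>
      (hF k).comp (contDiff_const.prodMk contDiff_id)
    have hmeas : ∀ v : E, AEStronglyMeasurable (fun p => F p v) μ := fun v =>
      (((hF 0).continuous).comp (Continuous.prodMk continuous_id continuous_const)
        : Continuous fun p : ℝ × ℝ => F p v).aestronglyMeasurable
    obtain ⟨C₀, hC₀⟩ := hbdd 0
    constructor
    · rw [show ((0:ℕ) : WithTop ℕ∞) = 0 from rfl, contDiff_zero]
      apply continuous_of_dominated (bound := fun _ => C₀) (fun v => hmeas v)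
      · intro v
        filter_upwards [hC₀] with p hp
        simpa [norm_iteratedFDeriv_zero] using hp v
      · exact integrable_const _
      · exact Filter.Eventually.of_forall fun p => (hslice 0 p).continuous
    · intro C hC v
      rw [norm_iteratedFDeriv_zero]
      have h1 : ‖∫ p, F p v ∂μ‖ ≤ ∫ _, C ∂μ := by
        apply norm_integral_le_of_norm_le (integrable_const _)
        filter_upwards [hC] with p hp
        simpa [norm_iteratedFDeriv_zero] using hp v
      exact h1.trans_eq (by simp [integral_const, smul_eq_mul, mul_comm, measureReal_def])
  | succ n ih =>
    intro G _ _ _ F hF hbdd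
    have hslice : ∀ (k : ℕ) p, ContDiff ℝ k (F p) := fun k p =>
      (hF k).comp (contDiff_const.prodMk contDiff_id)
    -- uncurried smoothness of the fderiv
    have hF' : ∀ k : ℕ, ContDiff ℝ k
        (fun pv : (ℝ × ℝ) × E => fderiv ℝ (F pv.1) pv.2) := by
      intro k
      have hcast : ContDiff ℝ ((k : WithTop ℕ∞) + 1) (fun pv : (ℝ × ℝ) × E => F pv.1 pv.2) :=
        (hF (k+1)).of_le (by norm_cast)
      have hu : ContDiff ℝ ((k : WithTop ℕ∞) + 1)
          (Function.uncurry fun (pv : (ℝ × ℝ) × E) (w : E) => F pv.1 w) :=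
        hcast.comp ((contDiff_fst.comp contDiff_fst).prodMk contDiff_snd)
      exact ContDiff.fderiv hu contDiff_snd le_rfl

    obtain ⟨C₀, hC₀⟩ := hbdd 0
    obtain ⟨C₁, hC₁⟩ := hbdd 1
    have hmeas : ∀ v : E, AEStronglyMeasurable (fun p => F p v) μ := fun v =>
      (((hF 0).continuous).comp (Continuous.prodMk continuous_id continuous_const)
        : Continuous fun p : ℝ × ℝ => F p v).aestronglyMeasurable
    have hmeas' : ∀ v : E, AEStronglyMeasurable (fun p => fderiv ℝ (F p) v) μ := fun v =>
      (((hF' 0).continuous).comp (Continuous.prodMk continuous_id continuous_const)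
        : Continuous fun p : ℝ × ℝ => fderiv ℝ (F p) v).aestronglyMeasurable
    have hnorm_fd : ∀ p (w : E), ‖fderiv ℝ (F p) w‖ = ‖iteratedFDeriv ℝ 1 (F p) w‖ := by
      intro p w
      rw [← norm_iteratedFDeriv_fderiv (n := 0), norm_iteratedFDeriv_zero]
    have hd : ∀ v : E, HasFDerivAt (fun w => ∫ p, F p w ∂μ) (∫ p, fderiv ℝ (F p) v ∂μ) v := by
      intro v
      apply hasFDerivAt_integral_of_dominated_of_fderiv_le (𝕜 := ℝ)
        (F := fun w p => F p w) (F' := fun w p => fderiv ℝ (F p) w)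
        (bound := fun _ => C₁) (s := Metric.ball v 1) (Metric.ball_mem_nhds v one_pos)
      · exact Filter.Eventually.of_forall fun w => hmeas w
      · apply Integrable.mono' (integrable_const C₀) (hmeas v)
        filter_upwards [hC₀] with p hp
        simpa [norm_iteratedFDeriv_zero] using hp v
      · exact hmeas' v
      · filter_upwards [hC₁] with p hp
        intro w _
        rw [hnorm_fd]; exact hp w
      · exact integrable_const _
      · exact Filter.Eventually.of_forall fun p w _ =>
          (((hslice 1 p).differentiable one_ne_zero) w).hasFDerivAt
    have hdiff_int : Differentiable ℝ (fun w => ∫ p, F p w ∂μ) := fun v => (hd v).differentiableAt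
    have hfe : fderiv ℝ (fun w => ∫ p, F p w ∂μ) = fun v => ∫ p, fderiv ℝ (F p) v ∂μ :=
      funext fun v => (hd v).fderiv
    have hbdd' : ∀ m : ℕ, ∃ C : ℝ, ∀ᵐ p ∂μ, ∀ v,
        ‖iteratedFDeriv ℝ m (fun w => fderiv ℝ (F p) w) v‖ ≤ C := by
      intro m
      obtain ⟨C, hC⟩ := hbdd (m+1)
      refine ⟨C, ?_⟩
      filter_upwards [hC] with p hp v
      rw [norm_iteratedFDeriv_fderiv]; exact hp v
    obtain ⟨ih1, ih2⟩ := ih (fun p w => fderiv ℝ (F p) w) hF' hbdd'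
    constructor
    · have h3 : ContDiff ℝ ((n : WithTop ℕ∞) + 1) (fun w => ∫ p, F p w ∂μ) := by
        rw [contDiff_succ_iff_fderiv]
        refine ⟨hdiff_int, ?_, ?_⟩
        · intro h; exact absurd h (by simp)
        · rw [hfe]; exact ih1
      exact h3.of_le (by norm_cast)
    · intro C hC v
      have h2 : ‖iteratedFDeriv ℝ (n+1) (fun w => ∫ p, F p w ∂μ) v‖
          = ‖iteratedFDeriv ℝ n (fun w => ∫ p, fderiv ℝ (F p) w ∂μ) v‖ := by
        rw [← norm_iteratedFDeriv_fderiv, hfe]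
      rw [h2]
      apply ih2 C _ v
      filter_upwards [hC] with p hp w
      rw [norm_iteratedFDeriv_fderiv]; exact hp w


private lemma exp_phase_ifd (n : ℕ) (t : ℝ) :
    ‖iteratedFDeriv ℝ n (fun t : ℝ => Complex.exp (-Complex.I * t)) t‖ = 1 := by
  have hg : ∀ s : ℝ, HasDerivAt (fun t : ℝ => Complex.exp (-Complex.I * t))
      (-Complex.I * Complex.exp (-Complex.I * s)) s := by
    intro s
    have h1 : HasDerivAt (fun t : ℝ => (-Complex.I) * (t : ℂ)) (-Complex.I) s := by
      simpa using (Complex.ofRealCLM.hasDerivAt (x := s)).const_mul (-Complex.I)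
    simpa [mul_comm] using h1.cexp
  have hiter : ∀ m : ℕ, iteratedDeriv m (fun t : ℝ => Complex.exp (-Complex.I * t))
      = fun t : ℝ => (-Complex.I)^m * Complex.exp (-Complex.I * t) := by
    intro m
    induction m with
    | zero => simp
    | succ m ihm =>
      rw [iteratedDeriv_succ, ihm]
      funext s
      have h2 : HasDerivAt (fun t : ℝ => (-Complex.I)^m * Complex.exp (-Complex.I * t))
          ((-Complex.I)^m * (-Complex.I * Complex.exp (-Complex.I * s))) s := (hg s).const_mul _
      rw [h2.deriv]; ring
  rw [norm_iteratedFDeriv_eq_norm_iteratedDeriv, hiter]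
  simp [Complex.norm_exp]

end MagAux

section Main
open MeasureTheory
set_option maxHeartbeats 2000000

/-- If the components of the magnetic field `B` are smooth with all derivatives
bounded, then all derivatives of `γ^B(q; ·, ·)` are polynomially bounded in
`(x, y)`, uniformly in `q`. -/
theorem stmt15 {N : ℕ} (B : Fin N → Fin N → EuclideanSpace ℝ (Fin N) → ℝ)
    (hBsmooth : ∀ j k, ContDiff ℝ (⊤ : ℕ∞) (B j k))
    (hBbdd : ∀ j k, ∀ n : ℕ, ∃ c : ℝ, ∀ q, ‖iteratedFDeriv ℝ n (B j k) q‖ ≤ c) :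
    ∀ n : ℕ, ∃ c : ℝ, 0 < c ∧ ∃ s₁ s₂ : ℝ, 0 ≤ s₁ ∧ 0 ≤ s₂ ∧
      ∀ q x y : EuclideanSpace ℝ (Fin N),
        ‖iteratedFDeriv ℝ n
            (fun v : EuclideanSpace ℝ (Fin N) × EuclideanSpace ℝ (Fin N) =>
              gammaB B q v.1 v.2) (x, y)‖ ≤
          c * jbr x ^ s₁ * jbr y ^ s₂ := by
  classical
  have hBk : ∀ j k (m : ℕ), ContDiff ℝ m (B j k) := fun j k m => (hBsmooth j k).of_le (by exact_mod_cast le_top)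
  have hBnorm : ∀ j k, ∃ c : ℝ, ∀ x, ‖B j k x‖ ≤ c := by
    intro j k
    obtain ⟨c, hc⟩ := hBbdd j k 0
    exact ⟨c, fun x => by simpa [norm_iteratedFDeriv_zero] using hc x⟩
  choose CF hCFnn hCFb using fun (j k : Fin N) (m : ℕ) =>
    magF_bound (B j k) (hBk j k) (hBbdd j k) m
  set μT : ℝ := (magMu Set.univ).toReal with hμTdef
  have hμTnn : 0 ≤ μT := ENNReal.toReal_nonneg
  intro n
  -- the key smoothness/bound facts for the inner integrals
  have hkey : ∀ (q : EuclideanSpace ℝ (Fin N)) (j k : Fin N) (m : ℕ),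
      ContDiff ℝ m (fun v : EuclideanSpace ℝ (Fin N) × EuclideanSpace ℝ (Fin N) =>
        ∫ p, magF q (B j k) p v ∂magMu) ∧
      ∀ v, ‖iteratedFDeriv ℝ m (fun v : EuclideanSpace ℝ (Fin N) × EuclideanSpace ℝ (Fin N) =>
        ∫ p, magF q (B j k) p v ∂magMu) v‖ ≤ CF j k m * μT := by
    intro q j k m
    have h := param_key magMu m (fun p w => magF q (B j k) p w)
      (fun k' => magF_smooth q (B j k) (hBk j k) k')
      (fun m' => ⟨CF j k m', hCFb j k m' q⟩)
    exact ⟨h.1, fun v => h.2 (CF j k m) (hCFb j k m q) v⟩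
  -- the phase function
  set Φ : EuclideanSpace ℝ (Fin N) →
      (EuclideanSpace ℝ (Fin N) × EuclideanSpace ℝ (Fin N)) → ℝ :=
    fun q v => ∑ jk : Fin N × Fin N,
      ((EuclideanSpace.proj jk.1).comp (ContinuousLinearMap.fst ℝ (EuclideanSpace ℝ (Fin N))
        (EuclideanSpace ℝ (Fin N)))) v *
      (((EuclideanSpace.proj jk.2).comp (ContinuousLinearMap.snd ℝ (EuclideanSpace ℝ (Fin N))
        (EuclideanSpace ℝ (Fin N)))) v * ∫ p, magF q (B jk.1 jk.2) p v ∂magMu) with hΦdef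
  have hΦsmooth : ∀ q (m : ℕ), ContDiff ℝ m (Φ q) := by
    intro q m
    apply ContDiff.sum
    intro jk _
    exact (ContinuousLinearMap.contDiff _).mul
      ((ContinuousLinearMap.contDiff _).mul (hkey q jk.1 jk.2 m).1)
  -- uniform polynomial bound on the derivatives of Φ up to order n
  have hΦbound : ∃ K : ℝ, 0 ≤ K ∧ ∀ q v, ∀ i ≤ n,
      ‖iteratedFDeriv ℝ i (Φ q) v‖ ≤ K * (1 + ‖v‖)^2 := by
    set CI : Fin N → Fin N → ℝ := fun j k => ∑ i ∈ Finset.range (n+1), CF j k i * μT with hCIdef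
    have hCInn : ∀ j k, 0 ≤ CI j k := fun j k =>
      Finset.sum_nonneg fun i _ => mul_nonneg (hCFnn j k i) hμTnn
    have hCIge : ∀ j k i, i ≤ n → CF j k i * μT ≤ CI j k := by
      intro j k i hi
      exact Finset.single_le_sum (f := fun i => CF j k i * μT)
        (fun i _ => mul_nonneg (hCFnn j k i) hμTnn) (Finset.mem_range.2 (by omega))
    refine ⟨∑ jk : Fin N × Fin N, 4^n *
      (‖(EuclideanSpace.proj jk.1).comp (ContinuousLinearMap.fst ℝ (EuclideanSpace ℝ (Fin N))
        (EuclideanSpace ℝ (Fin N)))‖ + 1) *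
      (‖(EuclideanSpace.proj jk.2).comp (ContinuousLinearMap.snd ℝ (EuclideanSpace ℝ (Fin N))
        (EuclideanSpace ℝ (Fin N)))‖ + 1) * CI jk.1 jk.2,
      Finset.sum_nonneg fun jk _ => by have := hCInn jk.1 jk.2; positivity, ?_⟩
    intro q v i hi
    have hsum := iteratedFDeriv_sum (𝕜 := ℝ) (i := i) (u := Finset.univ)
      (f := fun (jk : Fin N × Fin N)
          (v : EuclideanSpace ℝ (Fin N) × EuclideanSpace ℝ (Fin N)) =>
        ((EuclideanSpace.proj jk.1).comp (ContinuousLinearMap.fst ℝ (EuclideanSpace ℝ (Fin N))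
          (EuclideanSpace ℝ (Fin N)))) v *
        (((EuclideanSpace.proj jk.2).comp (ContinuousLinearMap.snd ℝ (EuclideanSpace ℝ (Fin N))
          (EuclideanSpace ℝ (Fin N)))) v * ∫ p, magF q (B jk.1 jk.2) p v ∂magMu))
      (fun jk _ => (ContinuousLinearMap.contDiff _).mul
        ((ContinuousLinearMap.contDiff _).mul (hkey q jk.1 jk.2 i).1))
    have hsum' : iteratedFDeriv ℝ i (Φ q) = ∑ jk : Fin N × Fin N,
        iteratedFDeriv ℝ i (fun v : EuclideanSpace ℝ (Fin N) × EuclideanSpace ℝ (Fin N) =>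
          ((EuclideanSpace.proj jk.1).comp (ContinuousLinearMap.fst ℝ (EuclideanSpace ℝ (Fin N))
            (EuclideanSpace ℝ (Fin N)))) v *
          (((EuclideanSpace.proj jk.2).comp (ContinuousLinearMap.snd ℝ (EuclideanSpace ℝ (Fin N))
            (EuclideanSpace ℝ (Fin N)))) v * ∫ p, magF q (B jk.1 jk.2) p v ∂magMu)) := by
      rw [hΦdef]
      exact hsum
    calc ‖iteratedFDeriv ℝ i (Φ q) v‖
        = ‖(∑ jk : Fin N × Fin N, iteratedFDeriv ℝ i (fun v =>
            ((EuclideanSpace.proj jk.1).comp (ContinuousLinearMap.fst ℝ (EuclideanSpace ℝ (Fin N))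
              (EuclideanSpace ℝ (Fin N)))) v *
            (((EuclideanSpace.proj jk.2).comp (ContinuousLinearMap.snd ℝ (EuclideanSpace ℝ (Fin N))
              (EuclideanSpace ℝ (Fin N)))) v * ∫ p, magF q (B jk.1 jk.2) p v ∂magMu))) v‖ := by
          rw [hsum']
      _ ≤ ∑ jk : Fin N × Fin N, ‖iteratedFDeriv ℝ i (fun v =>
            ((EuclideanSpace.proj jk.1).comp (ContinuousLinearMap.fst ℝ (EuclideanSpace ℝ (Fin N))
              (EuclideanSpace ℝ (Fin N)))) v *
            (((EuclideanSpace.proj jk.2).comp (ContinuousLinearMap.snd ℝ (EuclideanSpace ℝ (Fin N))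
              (EuclideanSpace ℝ (Fin N)))) v * ∫ p, magF q (B jk.1 jk.2) p v ∂magMu)) v‖ := by
          rw [Finset.sum_apply]
          exact norm_sum_le _ _
      _ ≤ ∑ jk : Fin N × Fin N, 4^n *
            (‖(EuclideanSpace.proj jk.1).comp (ContinuousLinearMap.fst ℝ (EuclideanSpace ℝ (Fin N))
              (EuclideanSpace ℝ (Fin N)))‖ + 1) *
            (‖(EuclideanSpace.proj jk.2).comp (ContinuousLinearMap.snd ℝ (EuclideanSpace ℝ (Fin N))
              (EuclideanSpace ℝ (Fin N)))‖ + 1) * CI jk.1 jk.2 * (1 + ‖v‖)^2 := by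
          apply Finset.sum_le_sum
          intro jk _
          refine (term_ifd_bound _ _ _ (fun k' => (hkey q jk.1 jk.2 k').1) i (CI jk.1 jk.2)
            (hCInn jk.1 jk.2) (fun i' hi' w =>
              ((hkey q jk.1 jk.2 i').2 w).trans (hCIge jk.1 jk.2 i' (by omega))) v).trans ?_
          have h4 : (4:ℝ)^i ≤ 4^n := pow_le_pow_right₀ (by norm_num) hi
          have hciNN := hCInn jk.1 jk.2
          gcongr
      _ = (∑ jk : Fin N × Fin N, 4^n *
            (‖(EuclideanSpace.proj jk.1).comp (ContinuousLinearMap.fst ℝ (EuclideanSpace ℝ (Fin N))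
              (EuclideanSpace ℝ (Fin N)))‖ + 1) *
            (‖(EuclideanSpace.proj jk.2).comp (ContinuousLinearMap.snd ℝ (EuclideanSpace ℝ (Fin N))
              (EuclideanSpace ℝ (Fin N)))‖ + 1) * CI jk.1 jk.2) * (1 + ‖v‖)^2 := by
          rw [Finset.sum_mul]
  -- value of Φ
  have hΦval : ∀ q v, Φ q v = ∑ j : Fin N, ∑ k : Fin N, v.1 j * v.2 k *
      ∫ s in (0:ℝ)..1, ∫ τ in (0:ℝ)..1,
        s * B j k (q - (1/2 : ℝ) • v.1 - (1/2 : ℝ) • v.2 + s • v.1 + (s * τ) • (v.2 - v.1)) := by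
    intro q v
    simp only [hΦdef]
    rw [Fintype.sum_prod_type]
    apply Finset.sum_congr rfl
    intro j _
    apply Finset.sum_congr rfl
    intro k _
    obtain ⟨cb, hcb⟩ := hBnorm j k
    rw [magF_integral_eq q (B j k) (hBk j k 0).continuous cb hcb v]
    simp only [ContinuousLinearMap.coe_comp', Function.comp_apply,
      ContinuousLinearMap.coe_fst', ContinuousLinearMap.coe_snd', PiLp.proj_apply]
    ring
  -- gammaB as a composition
  have hcompose : ∀ q, (fun t : ℝ => Complex.exp (-Complex.I * t)) ∘ (Φ q) =
      fun v : EuclideanSpace ℝ (Fin N) × EuclideanSpace ℝ (Fin N) => gammaB B q v.1 v.2 := by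
    intro q
    funext v
    simp only [Function.comp_apply, gammaB]
    rw [hΦval q v]
  obtain ⟨K, hKnn, hKb⟩ := hΦbound
  refine ⟨(Nat.factorial n : ℝ) * (1 + 16*K)^n, by positivity,
    ((2*n : ℕ) : ℝ), ((2*n : ℕ) : ℝ), by positivity, by positivity, ?_⟩
  intro q x y
  have hg : ContDiff ℝ n (fun t : ℝ => Complex.exp (-Complex.I * t)) :=
    ContDiff.cexp (contDiff_const.mul Complex.ofRealCLM.contDiff)
  have hvn : ‖((x, y) : EuclideanSpace ℝ (Fin N) × EuclideanSpace ℝ (Fin N))‖ ≤ ‖x‖ + ‖y‖ := by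
    rw [Prod.norm_def]
    exact max_le (le_add_of_nonneg_right (norm_nonneg _)) (le_add_of_nonneg_left (norm_nonneg _))
  have hvnn : (0:ℝ) ≤ 1 + ‖((x, y) : EuclideanSpace ℝ (Fin N) × EuclideanSpace ℝ (Fin N))‖ := by
    positivity
  have hD1 : (1:ℝ) ≤ 1 + K * (1 + ‖((x, y) : EuclideanSpace ℝ (Fin N) ×
      EuclideanSpace ℝ (Fin N))‖)^2 := le_add_of_nonneg_right (by positivity)
  have hcomp := norm_iteratedFDeriv_comp_le (𝕜 := ℝ)
    (g := fun t : ℝ => Complex.exp (-Complex.I * t)) (f := Φ q) (n := n)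
    (N := (n : WithTop ℕ∞)) hg (hΦsmooth q n) le_rfl ((x, y))
    (C := 1) (D := 1 + K * (1 + ‖((x, y) : EuclideanSpace ℝ (Fin N) ×
      EuclideanSpace ℝ (Fin N))‖)^2)
    (fun i _ => le_of_eq (exp_phase_ifd i (Φ q (x, y))))
    (fun i h1i hin => by
      calc ‖iteratedFDeriv ℝ i (Φ q) (x, y)‖
          ≤ K * (1 + ‖((x, y) : EuclideanSpace ℝ (Fin N) × EuclideanSpace ℝ (Fin N))‖)^2 :=
            hKb q (x, y) i hin
        _ ≤ 1 + K * (1 + ‖((x, y) : EuclideanSpace ℝ (Fin N) ×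
            EuclideanSpace ℝ (Fin N))‖)^2 := by
              nlinarith [hKnn, sq_nonneg (1 + ‖((x, y) : EuclideanSpace ℝ (Fin N) ×
                EuclideanSpace ℝ (Fin N))‖)]
        _ ≤ (1 + K * (1 + ‖((x, y) : EuclideanSpace ℝ (Fin N) ×
            EuclideanSpace ℝ (Fin N))‖)^2)^i := le_self_pow₀ hD1 (by omega))
  rw [hcompose q] at hcomp
  -- now estimate the D-power
  have hx2 := jbr_add_le x
  have hy2 := jbr_add_le y
  have hjx1 := jbr_one_le x
  have hjy1 := jbr_one_le y
  have hv2 : 1 + ‖((x, y) : EuclideanSpace ℝ (Fin N) × EuclideanSpace ℝ (Fin N))‖ ≤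
      4 * (jbr x * jbr y) := by
    nlinarith [norm_nonneg x, norm_nonneg y, jbr_nonneg x, jbr_nonneg y]
  have h16 : (1 + ‖((x, y) : EuclideanSpace ℝ (Fin N) × EuclideanSpace ℝ (Fin N))‖)^2 ≤
      (4 * (jbr x * jbr y))^2 := pow_le_pow_left₀ hvnn hv2 2
  have h1x : 1 ≤ (jbr x)^2 := by nlinarith
  have h1y : 1 ≤ (jbr y)^2 := by nlinarith
  have ha1 : 1 ≤ (jbr x)^2 * (jbr y)^2 := by nlinarith
  have hDle : 1 + K * (1 + ‖((x, y) : EuclideanSpace ℝ (Fin N) ×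
      EuclideanSpace ℝ (Fin N))‖)^2 ≤ (1 + 16*K) * ((jbr x)^2 * (jbr y)^2) := by
    have ha2 : K * (1 + ‖((x, y) : EuclideanSpace ℝ (Fin N) ×
        EuclideanSpace ℝ (Fin N))‖)^2 ≤ K * (16 * ((jbr x)^2 * (jbr y)^2)) :=
      mul_le_mul_of_nonneg_left (by nlinarith) hKnn
    nlinarith
  have hpow : (1 + K * (1 + ‖((x, y) : EuclideanSpace ℝ (Fin N) ×
      EuclideanSpace ℝ (Fin N))‖)^2)^n ≤ ((1 + 16*K) * ((jbr x)^2 * (jbr y)^2))^n :=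
    pow_le_pow_left₀ (by linarith) hDle n
  have hsplit : ((1 + 16*K) * ((jbr x)^2 * (jbr y)^2))^n =
      (1 + 16*K)^n * (jbr x ^ (2*n) * jbr y ^ (2*n)) := by
    rw [mul_pow, mul_pow, ← pow_mul, ← pow_mul]
    try ring
  have hrx : jbr x ^ (((2*n : ℕ) : ℝ)) = jbr x ^ (2*n : ℕ) := Real.rpow_natCast _ _
  have hry : jbr y ^ (((2*n : ℕ) : ℝ)) = jbr y ^ (2*n : ℕ) := Real.rpow_natCast _ _
  calc ‖iteratedFDeriv ℝ n (fun v : EuclideanSpace ℝ (Fin N) × EuclideanSpace ℝ (Fin N) =>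
        gammaB B q v.1 v.2) (x, y)‖
      ≤ (Nat.factorial n : ℝ) * 1 * (1 + K * (1 + ‖((x, y) : EuclideanSpace ℝ (Fin N) ×
          EuclideanSpace ℝ (Fin N))‖)^2)^n := hcomp
    _ ≤ (Nat.factorial n : ℝ) * 1 * ((1 + 16*K)^n * (jbr x ^ (2*n) * jbr y ^ (2*n))) := by
        rw [← hsplit]
        have : (0:ℝ) ≤ (Nat.factorial n : ℝ) := by positivity
        exact mul_le_mul_of_nonneg_left hpow (by positivity)
    _ = (Nat.factorial n : ℝ) * (1 + 16*K)^n * jbr x ^ (((2*n : ℕ) : ℝ)) *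
          jbr y ^ (((2*n : ℕ) : ℝ)) := by
        rw [hrx, hry]; ring
end Main
end

section
/- Let H be a self-adjoint operator on a Hilbert space ℋ and let 𝔎 be a closed two-sided ideal of a C*-subalgebra ℭ of bounded operators on ℋ such that η(H) ∈ ℭ for all η ∈ C_0(ℝ). Define σ_𝔎(H) := { λ ∈ ℝ : for all η ∈ C_0(ℝ), η(λ) ≠ 0 implies η(H) ∉ 𝔎 }. If η ∈ C_0(ℝ) vanishes on σ_𝔎(H), then η(H) ∈ 𝔎. -/
/-!
Let `J = {f ∈ C₀(ℝ) | Φ f ∈ K}`, a closed ideal of `C₀(ℝ)` whose common zero set is `σ_K(Φ)`.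
If `η` vanishes there, its truncation `η_ε` vanishing where `‖η‖ ≤ ε` is supported in the compact
set `{ε ≤ ‖η‖}`, on which no point is a common zero of `J`. By compactness, a finite sum of
elements `star g * g` of `J` is a function `ψ ∈ J`, `ψ ≥ 0`, positive on that set, and
`η_ε = (η_ε / ψ) * ψ ∈ J`. Letting `ε → 0` and using that `J` is closed gives `η ∈ J`.
-/

open Filter
open scoped ZeroAtInfty ComplexOrder BoundedContinuousFunction CStarAlgebra

namespace ZeroAtInftyContinuousMap

variable {X : Type*} [TopologicalSpace X]

section BoundedSMul

variable {𝕜 β : Type*} [NormedField 𝕜] [NormedAddCommGroup β] [NormedSpace 𝕜 β]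

instance : SMul (X →ᵇ 𝕜) C₀(X, β) where
  smul g f :=
    { toFun x := g x • f x
      continuous_toFun := g.continuous.smul (map_continuous f)
      zero_at_infty' := (isBoundedUnder_of ⟨‖g‖, g.norm_coe_le_norm⟩).smul_tendsto_zero
        (zero_at_infty f) }

@[simp]
lemma bcf_smul_apply (g : X →ᵇ 𝕜) (f : C₀(X, β)) (x : X) : (g • f) x = g x • f x := rfl

end BoundedSMul

variable {β : Type*} [NormedAddCommGroup β]

lemma isCompact_setOf_le_norm (f : C₀(X, β)) {ε : ℝ} (hε : 0 < ε) :
    IsCompact {x | ε ≤ ‖f x‖} := by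
  obtain ⟨t, ht, hsub⟩ := mem_cocompact'.1 <|
    (tendsto_zero_iff_norm_tendsto_zero.1 (zero_at_infty f)).eventually (gt_mem_nhds hε)
  refine ht.of_isClosed_subset (isClosed_le continuous_const (map_continuous f).norm) ?_
  intro x hx
  exact hsub (not_lt.2 hx : ¬ ‖f x‖ < ε)

lemma exists_dist_le_eq_zero_of_norm_le [NormedSpace ℝ β] (f : C₀(X, β)) {ε : ℝ} (hε : 0 < ε) :
    ∃ g : C₀(X, β), dist g f ≤ 2 * ε ∧ ∀ x, ‖f x‖ ≤ ε → g x = 0 := by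
  set φ : X →ᵇ ℝ := .ofNormedAddCommGroup (fun x ↦ min 1 (max 0 (‖f x‖ / ε - 1)))
    (by fun_prop) 1 (fun x ↦ by
      rw [Real.norm_of_nonneg (le_min zero_le_one (le_max_left _ _))]; exact min_le_left _ _)
  refine ⟨φ • f, ?_, fun x hx ↦ ?_⟩
  · rw [← dist_toBCF_eq_dist, BoundedContinuousFunction.dist_le (by positivity)]
    intro x
    have hφ0 : 0 ≤ φ x := le_min zero_le_one (le_max_left _ _)
    have hφ1 : φ x ≤ 1 := min_le_left _ _
    change dist (φ x • f x) (f x) ≤ 2 * ε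
    rw [dist_eq_norm, show φ x • f x - f x = (φ x - 1) • f x by rw [sub_smul, one_smul], norm_smul,
      Real.norm_of_nonpos (by linarith), neg_sub]
    rcases le_or_gt ‖f x‖ (2 * ε) with hx | hx
    · nlinarith [norm_nonneg (f x)]
    · have : φ x = 1 := min_eq_left <| le_max_of_le_right <| by
        rw [le_sub_iff_add_le, le_div_iff₀ hε]; linarith
      simp [this]; positivity
  · have : φ x = 0 := by
      have : ‖f x‖ / ε - 1 ≤ 0 := by rw [sub_nonpos, div_le_one hε]; exact hx
      simp [φ, max_eq_left this]
    simp [this]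

section Ideal

variable {𝕜 : Type*} [RCLike 𝕜] (J : TwoSidedIdeal C₀(X, 𝕜)) {C : Set X}

lemma exists_mem_nonneg_pos_on (hC : IsCompact C) (hJ : ∀ x ∈ C, ∃ g ∈ J, g x ≠ 0) :
    ∃ ψ ∈ J, (∀ x, 0 ≤ ψ x) ∧ ∀ x ∈ C, 0 < ψ x := by
  refine hC.induction_on ⟨0, J.zero_mem, fun _ ↦ le_rfl, by simp⟩ ?_ ?_ ?_
  · rintro s t hst ⟨ψ, hψJ, hψ0, hψt⟩
    exact ⟨ψ, hψJ, hψ0, fun x hx ↦ hψt x (hst hx)⟩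
  · rintro s t ⟨ψ, hψJ, hψ0, hψs⟩ ⟨χ, hχJ, hχ0, hχt⟩
    refine ⟨ψ + χ, J.add_mem hψJ hχJ, fun x ↦ add_nonneg (hψ0 x) (hχ0 x), ?_⟩
    rintro x (hx | hx)
    · exact add_pos_of_pos_of_nonneg (hψs x hx) (hχ0 x)
    · exact add_pos_of_nonneg_of_pos (hψ0 x) (hχt x hx)
  · intro x hx
    obtain ⟨g, hgJ, hgx⟩ := hJ x hx
    refine ⟨{y | g y ≠ 0}, mem_nhdsWithin_of_mem_nhds ?_, star g * g, J.mul_mem_left _ _ hgJ,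
      fun y ↦ star_mul_self_nonneg (g y), fun y hy ↦ ?_⟩
    · exact (map_continuous g).isOpen_preimage _ isOpen_ne |>.mem_nhds hgx
    · exact star_mul_self_pos (.of_ne_zero hy)

/-- `f = (f / max ψ δ) * ψ`, where `ψ ∈ J` is positive on `C` and `δ` is its minimum there. -/
lemma mem_of_eq_zero_off_compact (hC : IsCompact C) (hJ : ∀ x ∈ C, ∃ g ∈ J, g x ≠ 0)
    {f : C₀(X, 𝕜)} (hf : ∀ x ∉ C, f x = 0) : f ∈ J := by
  obtain ⟨ψ, hψJ, hψ0, hψC⟩ := exists_mem_nonneg_pos_on J hC hJ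
  have hreψ : Continuous fun x ↦ RCLike.re (ψ x) := RCLike.continuous_re.comp (map_continuous ψ)
  obtain ⟨δ, hδ, hδC⟩ := hC.exists_forall_le' hreψ.continuousOn
    fun x hx ↦ (RCLike.pos_iff.1 (hψC x hx)).1
  set h : X →ᵇ ℝ := .ofNormedAddCommGroup (fun x ↦ (max (RCLike.re (ψ x)) δ)⁻¹)
    (hreψ.max continuous_const |>.inv₀
      fun x ↦ (hδ.trans_le (le_max_right _ _)).ne') δ⁻¹
    (fun x ↦ by
      rw [norm_inv, Real.norm_of_nonneg (hδ.le.trans (le_max_right _ _))]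
      exact inv_anti₀ hδ (le_max_right _ _))
  suffices f = (h • f) * ψ from this ▸ J.mul_mem_left _ _ hψJ
  ext x
  by_cases hx : x ∈ C
  · have hre : ψ x = RCLike.re (ψ x) :=
      RCLike.ext (by simp) (by simp [(RCLike.nonneg_iff.1 (hψ0 x)).2])
    have hδx : δ ≤ RCLike.re (ψ x) := hδC x hx
    have hpos : (RCLike.re (ψ x) : 𝕜) ≠ 0 := RCLike.ofReal_ne_zero.2 (hδ.trans_le hδx).ne'
    change f x = (h x • f x) * ψ x
    rw [hre]
    simp only [h, BoundedContinuousFunction.coe_ofNormedAddCommGroup, max_eq_left hδx,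
      RCLike.real_smul_eq_coe_mul, RCLike.ofReal_inv]
    field_simp
  · simp [hf x hx]

lemma mem_of_isClosed_of_forall_eq_zero (hJ : IsClosed (J : Set C₀(X, 𝕜))) {f : C₀(X, 𝕜)}
    (hf : ∀ x, (∀ g ∈ J, g x = 0) → f x = 0) : f ∈ J := by
  refine hJ.closure_subset_iff.2 le_rfl (Metric.mem_closure_iff.2 fun ε hε ↦ ?_)
  have hε3 : 0 < ε / 3 := by positivity
  obtain ⟨g, hgf, hg⟩ := exists_dist_le_eq_zero_of_norm_le f hε3
  refine ⟨g, mem_of_eq_zero_off_compact J (isCompact_setOf_le_norm f hε3)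
    (fun x hx ↦ ?_) (fun x hx ↦ hg x (not_le.1 hx).le), ?_⟩
  · by_contra! h
    exact norm_pos_iff.1 (hε3.trans_le hx) (hf x h)
  · rw [dist_comm]; linarith

end Ideal

end ZeroAtInftyContinuousMap

/-- Abstract localization lemma: let `Φ : C₀(ℝ) → A` be an observable (a
*-homomorphism into a C*-algebra `A`) and `K` a closed two-sided ideal of `A`.
Define the `K`-essential spectrum `σ_K(Φ) = {λ | ∀ ζ, ζ(λ) ≠ 0 → Φ(ζ) ∉ K}`.
If `η ∈ C₀(ℝ)` vanishes on `σ_K(Φ)`, then `Φ(η) ∈ K`. -/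
theorem stmt18 (A : Type*) [NonUnitalNormedRing A] [StarRing A] [CStarRing A]
    [CompleteSpace A] [NormedSpace ℂ A] [IsScalarTower ℂ A A]
    [SMulCommClass ℂ A A] [StarModule ℂ A]
    (Φ : ZeroAtInftyContinuousMap ℝ ℂ →⋆ₙₐ[ℂ] A)
    (K : TwoSidedIdeal A) (hK : IsClosed (K : Set A))
    (η : ZeroAtInftyContinuousMap ℝ ℂ)
    (hη : ∀ lam : ℝ,
      (∀ ζ : ZeroAtInftyContinuousMap ℝ ℂ, ζ lam ≠ 0 → Φ ζ ∉ K) → η lam = 0) :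
    Φ η ∈ K := by
  -- makes `Φ` continuous: *-homomorphisms between C⋆-algebras are contractive
  let _ : NonUnitalCStarAlgebra A := {}
  have hJ : IsClosed (K.comap Φ : Set C₀(ℝ, ℂ)) := by
    convert hK.preimage (map_continuous Φ)
    ext; exact TwoSidedIdeal.mem_comap _
  refine (TwoSidedIdeal.mem_comap _).1 <|
    ZeroAtInftyContinuousMap.mem_of_isClosed_of_forall_eq_zero _ hJ fun lam hlam ↦ ?_
  exact hη lam fun ζ hζ hΦζ ↦ hζ (hlam ζ ((TwoSidedIdeal.mem_comap _).2 hΦζ))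
end

section
/- Let X = ℝ^N, let 𝒜 be a unital, translation-invariant C*-subalgebra of the bounded uniformly continuous functions BC_u(X) containing C_0(X), and let F be a closed translation-invariant subset of the Gelfand spectrum of 𝒜 (identifying 𝒜 with C(S_𝒜)). Fix a character ϰ ∈ F whose orbit is dense in F. For b ∈ C(F) define b_ϰ : X → ℂ by b_ϰ(x) := b(θ̃(x, ϰ)), where θ̃ is the extended translation action. Then the map b ↦ b_ϰ is an isometric *-homomorphism from C(F) into BC_u(X) that intertwines the translation action of X on C(F) with the natural translation action on BC_u(X). -/
open Filter

/-- Realization of `C(F)` inside `BC_u(X)`: let `S` be a compact Hausdorff space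
(the Gelfand spectrum `S_𝒜`) carrying a continuous action `θ` of `X = ℝ^N`
extending translations, let `F ⊆ S` be a closed invariant subset, and let
`ϰ ∈ F` generate a dense orbit in `F`. Then the map
`b ↦ b_ϰ := (x ↦ b(θ(x, ϰ)))` from `C(F)` to functions on `X` takes values in
the bounded uniformly continuous functions, is an isometric *-homomorphism,
and intertwines the action of `X` on `C(F)` with translations. -/
theorem stmt19 {N : ℕ} (S : Type*) [TopologicalSpace S] [CompactSpace S] [T2Space S]
    (θ : EuclideanSpace ℝ (Fin N) → S → S)
    (hcont : Continuous fun p : EuclideanSpace ℝ (Fin N) × S => θ p.1 p.2)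
    (hzero : ∀ s : S, θ 0 s = s)
    (hadd : ∀ x y : EuclideanSpace ℝ (Fin N), ∀ s : S, θ (x + y) s = θ x (θ y s))
    (F : Set S) (hFcl : IsClosed F)
    (hFinv : ∀ x : EuclideanSpace ℝ (Fin N), ∀ s ∈ F, θ x s ∈ F)
    (ϰ : S) (hϰ : ϰ ∈ F)
    (hdense : closure {s : S | ∃ x : EuclideanSpace ℝ (Fin N), s = θ x ϰ} = F) :
    (∀ b : C(F, ℂ),
      UniformContinuous (fun x => b ⟨θ x ϰ, hFinv x ϰ hϰ⟩)) ∧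
    (∀ b : C(F, ℂ), ∃ C : ℝ, ∀ x, ‖b ⟨θ x ϰ, hFinv x ϰ hϰ⟩‖ ≤ C) ∧
    (∀ b c : C(F, ℂ), ∀ x,
      (b + c) ⟨θ x ϰ, hFinv x ϰ hϰ⟩ =
        b ⟨θ x ϰ, hFinv x ϰ hϰ⟩ + c ⟨θ x ϰ, hFinv x ϰ hϰ⟩) ∧
    (∀ b c : C(F, ℂ), ∀ x,
      (b * c) ⟨θ x ϰ, hFinv x ϰ hϰ⟩ =
        b ⟨θ x ϰ, hFinv x ϰ hϰ⟩ * c ⟨θ x ϰ, hFinv x ϰ hϰ⟩) ∧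
    (∀ b : C(F, ℂ), ∀ x,
      (star b) ⟨θ x ϰ, hFinv x ϰ hϰ⟩ =
        starRingEnd ℂ (b ⟨θ x ϰ, hFinv x ϰ hϰ⟩)) ∧
    (∀ b : C(F, ℂ),
      (⨆ x : EuclideanSpace ℝ (Fin N), ‖b ⟨θ x ϰ, hFinv x ϰ hϰ⟩‖) =
        ⨆ f : F, ‖b f‖) ∧
    (∀ b : C(F, ℂ), ∀ x y : EuclideanSpace ℝ (Fin N),
      b ⟨θ (x + y) ϰ, hFinv (x + y) ϰ hϰ⟩ =
        b ⟨θ y (θ x ϰ), hFinv y _ (hFinv x ϰ hϰ)⟩) := by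

  haveI : CompactSpace F := isCompact_iff_compactSpace.mp (hFcl.isCompact)
  have horb : ∀ x : EuclideanSpace ℝ (Fin N), θ x ϰ ∈ F := fun x => hFinv x ϰ hϰ
  refine ⟨?_, ?_, ?_, ?_, ?_, ?_, ?_⟩
  · -- uniform continuity
    intro b
    rw [Metric.uniformContinuous_iff]
    intro ε hε
    set H : EuclideanSpace ℝ (Fin N) × F → ℝ :=
      fun p => dist (b ⟨θ p.1 p.2, hFinv p.1 p.2 p.2.2⟩) (b p.2) with hH
    have hHcont : Continuous H := by
      apply Continuous.dist
      · exact b.continuous.comp ((hcont.comp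
          (continuous_fst.prodMk (continuous_subtype_val.comp continuous_snd))).subtype_mk _)
      · exact b.continuous.comp continuous_snd
    have hopen : IsOpen (H ⁻¹' Set.Iio ε) := hHcont.isOpen_preimage _ isOpen_Iio
    have hsub : ({(0 : EuclideanSpace ℝ (Fin N))} ×ˢ (Set.univ : Set F)) ⊆ H ⁻¹' Set.Iio ε := by
      rintro ⟨u, f⟩ ⟨hu, -⟩
      simp only [Set.mem_singleton_iff] at hu
      subst hu
      have : (⟨θ 0 f, hFinv 0 f f.2⟩ : F) = f := Subtype.ext (hzero f)
      simp only [Set.mem_preimage, Set.mem_Iio, hH, this, dist_self]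
      exact hε
    obtain ⟨u, v, hu, hv, h0u, huniv, huv⟩ :=
      generalized_tube_lemma isCompact_singleton isCompact_univ hopen hsub
    obtain ⟨δ, hδ, hball⟩ := Metric.isOpen_iff.mp hu 0 (h0u rfl)
    refine ⟨δ, hδ, ?_⟩
    intro x y hxy
    have hmem : (x - y, (⟨θ y ϰ, horb y⟩ : F)) ∈ u ×ˢ v := by
      constructor
      · apply hball
        rw [Metric.mem_ball, dist_zero_right, ← dist_eq_norm]
        exact hxy
      · exact huniv (Set.mem_univ _)
    have := huv hmem
    simp only [Set.mem_preimage, Set.mem_Iio, hH] at this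
    have hval : (⟨θ (x - y) (⟨θ y ϰ, horb y⟩ : F), hFinv (x - y) _ (horb y)⟩ : F) = ⟨θ x ϰ, horb x⟩ := by
      apply Subtype.ext
      show θ (x - y) (θ y ϰ) = θ x ϰ
      rw [← hadd, sub_add_cancel]
    rwa [hval] at this
  · -- boundedness
    intro b
    exact ⟨‖b‖, fun x => b.norm_coe_le_norm _⟩
  · intro b c x; rfl
  · intro b c x; rfl
  · intro b x; rfl
  · -- sup equality
    intro b
    have hbddX : BddAbove (Set.range fun x : EuclideanSpace ℝ (Fin N) =>
        ‖b ⟨θ x ϰ, horb x⟩‖) := ⟨‖b‖, by rintro r ⟨x, rfl⟩; exact b.norm_coe_le_norm _⟩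
    have hbddF : BddAbove (Set.range fun f : F => ‖b f‖) :=
      ⟨‖b‖, by rintro r ⟨f, rfl⟩; exact b.norm_coe_le_norm _⟩
    haveI : Nonempty F := ⟨⟨ϰ, hϰ⟩⟩
    apply le_antisymm
    · exact ciSup_le fun x => le_ciSup hbddF (⟨θ x ϰ, horb x⟩ : F)
    · refine ciSup_le fun f => ?_
      set M := ⨆ x : EuclideanSpace ℝ (Fin N), ‖b ⟨θ x ϰ, horb x⟩‖ with hM
      set C : Set F := {g : F | ‖b g‖ ≤ M} with hC
      have hCcl : IsClosed C :=
        isClosed_le (b.continuous.norm) continuous_const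
      set orb : Set F := {g : F | ∃ x : EuclideanSpace ℝ (Fin N), (g : S) = θ x ϰ} with horb'
      have hsub : orb ⊆ C := by
        rintro g ⟨x, hx⟩
        have : g = ⟨θ x ϰ, horb x⟩ := Subtype.ext hx
        rw [this]
        exact le_ciSup hbddX x
      have hfcl : f ∈ closure orb := by
        rw [closure_subtype]
        have himg : (Subtype.val '' orb) = {s : S | ∃ x : EuclideanSpace ℝ (Fin N), s = θ x ϰ} := by
          ext s
          constructor
          · rintro ⟨g, ⟨x, hx⟩, rfl⟩; exact ⟨x, hx⟩
          · rintro ⟨x, rfl⟩; exact ⟨⟨θ x ϰ, horb x⟩, ⟨x, rfl⟩, rfl⟩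
        rw [himg, hdense]
        exact f.2
      exact hCcl.closure_subset (closure_mono hsub hfcl)
  · intro b x y
    apply congrArg
    apply Subtype.ext
    show θ (x + y) ϰ = θ y (θ x ϰ)
    rw [add_comm, hadd]
end
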